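/- arXiv:2108.06477 — 4 statements merged into one kernel-verified Lean document; each statement's English description precedes it below -/
import Mathlib

section
/- There exists a 4-edge-colouring of the complete graph K_10 containing no monochromatic copy of P_5; consequently R_4(P_5) ≥ 11. -/
/-- `G` contains the path on `t` vertices as a subgraph. -/
def ContainsPath (t : ℕ) {V : Type*} (G : SimpleGraph V) : Prop :=
  ∃ f : Fin t → V, Function.Injective f ∧
    ∀ i j : Fin t, (i : ℕ) + 1 = (j : ℕ) → G.Adj (f i) (f j)

/-- The graph on `Fin n` formed by the edges of colour `c`. -/
def colorClass {n r : ℕ} (C : Sym2 (Fin n) → Fin r) (c : Fin r) : SimpleGraph (Fin n) :=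
  SimpleGraph.fromEdgeSet {e | C e = c}

/-- The colouring `C` contains a monochromatic path on `t` vertices. -/
def HasMonoPath (t : ℕ) {n r : ℕ} (C : Sym2 (Fin n) → Fin r) : Prop :=
  ∃ c : Fin r, ContainsPath t (colorClass C c)

/-- The `r`-coloured Ramsey number of the path on `t` vertices. -/
noncomputable def pathRamsey (r t : ℕ) : ℕ :=
  sInf {n | ∀ C : Sym2 (Fin n) → Fin r, HasMonoPath t C}

/-- The Turán number of the path on `t` vertices. -/
noncomputable def exPath (t n : ℕ) : ℕ :=
  sSup {m | ∃ G : SimpleGraph (Fin n), ¬ ContainsPath t G ∧ G.edgeSet.ncard = m}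

/-!
Partition the ten vertices in four ways into blocks of at most four vertices, so that every pair
lies in a common block of some partition, and colour a pair by the first such partition. A path
of colour `c` stays inside one block of partition `c`, hence has at most four vertices.

The bound `R₄(P₅) ≥ 11` also needs `R₄(P₅)` to be finite, since `sInf ∅ = 0`. If every vertex
of `S` has at least `t - 1` neighbours in `S`, a path in `S` can be extended greedily at its first
vertex until it has `t` vertices. So a graph without `P_t` is `(t - 2)`-degenerate, hence has at
most `(t - 2) n` edges, and `r` such graphs cannot cover `K_n` once `n > 2 r (t - 2) + 1`.
-/

open Finset

section Paths

variable {V : Type*} {G : SimpleGraph V}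

lemma ContainsPath.map {W : Type*} {H : SimpleGraph W} {t : ℕ} (h : ContainsPath t G)
    (φ : G →g H) (hφ : Function.Injective φ) : ContainsPath t H :=
  let ⟨f, hf, hadj⟩ := h
  ⟨φ ∘ f, hφ.comp hf, fun i j hij => φ.map_adj (hadj i j hij)⟩

lemma not_containsPath_of_card_fiber_le [Fintype V] {α : Type*} [DecidableEq α] {t : ℕ}
    (g : V → α) (hg : ∀ a b, G.Adj a b → g a = g b) (hfiber : ∀ x, #{v | g v = x} ≤ t) :
    ¬ ContainsPath (t + 1) G := by
  rintro ⟨f, hf, hadj⟩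
  have hconst : ∀ i, g (f i) = g (f 0) :=
    Fin.induction rfl fun i ih => (hg _ _ (hadj i.castSucc i.succ (by simp))).symm.trans ih
  have hcard : #(univ : Finset (Fin (t + 1))) ≤ #{v | g v = g (f 0)} :=
    card_le_card_of_injOn f (fun i _ => by simp [hconst i]) hf.injOn
  simpa using hcard.trans (hfiber _)

variable [DecidableEq V] [DecidableRel G.Adj]

lemma containsPath_of_le_card_adj {S : Finset V} (hS : S.Nonempty) {t : ℕ}
    (hdeg : ∀ v ∈ S, t - 1 ≤ #{w ∈ S | G.Adj v w}) : ContainsPath t G := by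
  suffices hpath : ∀ k < t, ∃ f : Fin (k + 1) → V, Function.Injective f ∧ (∀ i, f i ∈ S) ∧
      ∀ i j : Fin (k + 1), (i : ℕ) + 1 = (j : ℕ) → G.Adj (f i) (f j) by
    obtain _ | k := t
    · exact ⟨Fin.elim0, fun i => i.elim0, fun i => i.elim0⟩
    · obtain ⟨f, hf, -, hadj⟩ := hpath k k.lt_succ_self
      exact ⟨f, hf, hadj⟩
  intro k
  induction k with
  | zero =>
    intro _
    obtain ⟨v, hv⟩ := hS
    exact ⟨fun _ => v, fun _ _ _ => Subsingleton.elim (α := Fin 1) _ _, fun _ => hv, by simp⟩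
  | succ k ih =>
    intro hk
    obtain ⟨f, hf, hfS, hadj⟩ := ih (by omega)
    have hcard : #((univ.image f).erase (f 0)) < #{w ∈ S | G.Adj (f 0) w} := by
      rw [card_erase_of_mem (mem_image_of_mem f (mem_univ 0)), card_image_of_injective _ hf]
      have := hdeg (f 0) (hfS 0)
      simp only [card_univ, Fintype.card_fin]
      omega
    obtain ⟨w, hw, hwf⟩ := exists_mem_notMem_of_card_lt_card hcard
    obtain ⟨hwS, hw0⟩ := mem_filter.mp hw
    have hwrange : w ∉ Set.range f := by
      rintro ⟨i, rfl⟩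
      exact hwf (mem_erase.mpr ⟨hw0.ne', mem_image_of_mem f (mem_univ i)⟩)
    refine ⟨Fin.cons w f, Fin.cons_injective_iff.mpr ⟨hwrange, hf⟩,
      Fin.cases hwS hfS, fun i j hij => ?_⟩
    induction i using Fin.cases with
    | zero =>
      induction j using Fin.cases with
      | zero => simp at hij
      | succ j =>
        obtain rfl : j = 0 := Fin.ext (by simpa using hij.symm)
        simpa using hw0.symm
    | succ i =>
      induction j using Fin.cases with
      | zero => simp at hij
      | succ j => simpa using hadj i j (by simpa using hij)

lemma exists_card_adj_le_of_not_containsPath {t : ℕ} (h : ¬ ContainsPath t G)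
    {S : Finset V} (hS : S.Nonempty) : ∃ v ∈ S, #{w ∈ S | G.Adj v w} ≤ t - 2 := by
  by_contra! hdeg
  exact h (containsPath_of_le_card_adj hS fun v hv => by have := hdeg v hv; omega)

lemma card_adj_pairs_le {d : ℕ}
    (hdeg : ∀ S : Finset V, S.Nonempty → ∃ v ∈ S, #{w ∈ S | G.Adj v w} ≤ d) (S : Finset V) :
    #{p ∈ S ×ˢ S | G.Adj p.1 p.2} ≤ 2 * d * #S := by
  induction S using Finset.strongInduction with
  | H S ih =>
  obtain rfl | hS := S.eq_empty_or_nonempty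
  · simp
  obtain ⟨v, hv, hvd⟩ := hdeg S hS
  set N := {w ∈ S | G.Adj v w}
  have hsub : {p ∈ S ×ˢ S | G.Adj p.1 p.2} ⊆
      {p ∈ S.erase v ×ˢ S.erase v | G.Adj p.1 p.2} ∪ ({v} ×ˢ N) ∪ (N ×ˢ {v}) := by
    rintro ⟨a, b⟩ hab
    simp only [mem_filter, mem_product] at hab
    obtain ⟨⟨ha, hb⟩, hadj⟩ := hab
    by_cases hav : a = v
    · subst hav; simp [N, hb, hadj]
    by_cases hbv : b = v
    · subst hbv; simp [N, ha, hadj.symm]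
    · simp [hav, hbv, ha, hb, hadj]
  have hrest := ih (S.erase v) (erase_ssubset hv)
  have hcard := card_le_card hsub
  grw [card_union_le, card_union_le, card_product, card_product, card_singleton, hrest,
    card_erase_of_mem hv] at hcard
  have hS1 : 2 * d * (#S - 1) + 2 * d = 2 * d * #S := by
    rw [← mul_add_one, Nat.sub_one_add_one hS.card_pos.ne']
  linarith

end Paths

section Colourings

variable {n r t : ℕ}

lemma colorClass_adj {C : Sym2 (Fin n) → Fin r} {c : Fin r} {a b : Fin n} :
    (colorClass C c).Adj a b ↔ C s(a, b) = c ∧ a ≠ b :=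
  SimpleGraph.fromEdgeSet_adj _

lemma HasMonoPath.of_comp_sym2Map {m : ℕ} {C : Sym2 (Fin n) → Fin r} (φ : Fin m ↪ Fin n)
    (h : HasMonoPath t (C ∘ Sym2.map φ)) : HasMonoPath t C := by
  obtain ⟨c, hc⟩ := h
  refine ⟨c, hc.map ⟨φ, fun hab => ?_⟩ φ.injective⟩
  obtain ⟨hcol, hne⟩ := colorClass_adj.mp hab
  exact colorClass_adj.mpr ⟨hcol, φ.injective.ne hne⟩

lemma hasMonoPath_of_lt (C : Sym2 (Fin n) → Fin r) (hn : 2 * r * (t - 2) + 1 < n) :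
    HasMonoPath t C := by
  classical
  by_contra hC
  set E : Fin r → Finset (Fin n × Fin n) :=
    fun c => {p ∈ univ ×ˢ univ | (colorClass C c).Adj p.1 p.2}
  have hE : ∀ c, #(E c) ≤ 2 * (t - 2) * n := fun c => by
    simpa [E] using card_adj_pairs_le
      (fun S hS => exists_card_adj_le_of_not_containsPath (fun h => hC ⟨c, h⟩) hS) univ
  have hcover : (univ : Finset (Fin n)).offDiag ⊆ univ.biUnion E := by
    rintro ⟨a, b⟩ hab
    simp only [mem_offDiag, mem_univ, true_and] at hab
    simpa [E, colorClass_adj] using hab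
  have hcount : n * (n - 1) ≤ n * (2 * r * (t - 2)) := calc
    n * (n - 1) = #(univ : Finset (Fin n)).offDiag := by simp [offDiag_card, Nat.mul_sub_one]
    _ ≤ ∑ c, #(E c) := (card_le_card hcover).trans card_biUnion_le
    _ ≤ ∑ _c : Fin r, 2 * (t - 2) * n := sum_le_sum fun c _ => hE c
    _ = n * (2 * r * (t - 2)) := by
      rw [sum_const, card_univ, Fintype.card_fin, smul_eq_mul]; ring
  have := Nat.le_of_mul_le_mul_left hcount (by omega)
  omega

lemma lt_pathRamsey_of_not_hasMonoPath {C : Sym2 (Fin n) → Fin r} (hC : ¬ HasMonoPath t C) :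
    n < pathRamsey r t := by
  have hfinite : 2 * r * (t - 2) + 2 ∈ {n | ∀ C : Sym2 (Fin n) → Fin r, HasMonoPath t C} :=
    fun C' => hasMonoPath_of_lt C' (by omega)
  refine le_csInf ⟨_, hfinite⟩ fun m hm => ?_
  by_contra! hmn
  exact hC ((hm (C ∘ Sym2.map (Fin.castLEEmb (by omega)))).of_comp_sym2Map _)

end Colourings

/-- Row `c` gives the block of each vertex in the `c`-th partition. -/
def k10Blocks : Fin 4 → Fin 10 → Fin 3 :=
  ![![0, 2, 2, 0, 0, 0, 1, 1, 1, 1],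
    ![0, 1, 0, 1, 2, 0, 2, 1, 0, 1],
    ![0, 1, 2, 2, 1, 0, 2, 0, 1, 0],
    ![0, 0, 1, 2, 1, 0, 0, 1, 2, 1]]

def k10PairColour (a b : Fin 10) : Fin 4 :=
  if k10Blocks 0 a = k10Blocks 0 b then 0
  else if k10Blocks 1 a = k10Blocks 1 b then 1
  else if k10Blocks 2 a = k10Blocks 2 b then 2
  else 3

lemma k10PairColour_comm : ∀ a b, k10PairColour a b = k10PairColour b a := by decide

def k10Colouring : Sym2 (Fin 10) → Fin 4 :=
  Sym2.lift ⟨k10PairColour, k10PairColour_comm⟩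

lemma k10Blocks_pairColour : ∀ a b, a ≠ b →
    k10Blocks (k10PairColour a b) a = k10Blocks (k10PairColour a b) b := by
  decide

lemma card_k10Block_le : ∀ c x, #{v | k10Blocks c v = x} ≤ 4 := by decide

lemma not_hasMonoPath_k10Colouring : ¬ HasMonoPath 5 k10Colouring := by
  rintro ⟨c, hc⟩
  refine not_containsPath_of_card_fiber_le (k10Blocks c) (fun a b hab => ?_)
    (card_k10Block_le c) hc
  obtain ⟨rfl, hne⟩ := colorClass_adj.mp hab
  exact k10Blocks_pairColour a b hne

/-- There is a 4-edge-colouring of `K₁₀` with no monochromatic copy of `P₅`;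
consequently `R₄(P₅) ≥ 11`. -/
theorem pathRamsey_four_P5_lower :
    (∃ C : Sym2 (Fin 10) → Fin 4, ¬ HasMonoPath 5 C) ∧ 11 ≤ pathRamsey 4 5 :=
  ⟨⟨k10Colouring, not_hasMonoPath_k10Colouring⟩,
    lt_pathRamsey_of_not_hasMonoPath not_hasMonoPath_k10Colouring⟩
end

section
/- Let n = 4a + b, where a ≥ 0 and 0 ≤ b ≤ 3 are integers. Then ex(n, P_5) = 6a + b(b−1)/2. -/
open Finset SimpleGraph

def pathFiveBound (n : ℕ) : ℕ := 6 * (n / 4) + n % 4 * (n % 4 - 1) / 2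

lemma pathFiveBound_add_le (m n : ℕ) :
    pathFiveBound m + pathFiveBound n ≤ pathFiveBound (m + n) := by
  unfold pathFiveBound
  have hm : m % 4 < 4 := Nat.mod_lt m (by norm_num)
  have hn : n % 4 < 4 := Nat.mod_lt n (by norm_num)
  have hmn : (m + n) % 4 < 4 := Nat.mod_lt _ (by norm_num)
  generalize hr : m % 4 = r at *
  generalize ht : n % 4 = t at *
  generalize hu : (m + n) % 4 = u at *
  interval_cases r <;> interval_cases t <;> interval_cases u <;> omega

lemma le_pathFiveBound {n : ℕ} (hn : 5 ≤ n) : n ≤ pathFiveBound n := by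
  unfold pathFiveBound
  have hr : n % 4 < 4 := Nat.mod_lt n (by norm_num)
  generalize hr' : n % 4 = r at *
  interval_cases r <;> omega

lemma pathFiveBound_of_le_four {n : ℕ} (hn : n ≤ 4) : pathFiveBound n = n * (n - 1) / 2 := by
  interval_cases n <;> rfl

lemma pathFiveBound_four_mul_add (a : ℕ) {b : ℕ} (hb : b < 4) :
    pathFiveBound (4 * a + b) = 6 * a + b * (b - 1) / 2 := by
  rw [pathFiveBound, show (4 * a + b) / 4 = a by omega, show (4 * a + b) % 4 = b by omega]

variable {V : Type*}

lemma ContainsPath.mono {t : ℕ} {G H : SimpleGraph V} (hGH : G ≤ H) :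
    ContainsPath t G → ContainsPath t H
  | ⟨f, hf, hadj⟩ => ⟨f, hf, fun i j hij => hGH (hadj i j hij)⟩

lemma containsPath_five_of_adj {G : SimpleGraph V} {a b c d e : V}
    (hab : G.Adj a b) (hbc : G.Adj b c) (hcd : G.Adj c d) (hde : G.Adj d e)
    (hac : a ≠ c) (had : a ≠ d) (hae : a ≠ e) (hbd : b ≠ d) (hbe : b ≠ e) (hce : c ≠ e) :
    ContainsPath 5 G := by
  have := hab.ne; have := hbc.ne; have := hcd.ne; have := hde.ne
  refine ⟨![a, b, c, d, e], ?_, ?_⟩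
  · intro i j hij
    fin_cases i <;> fin_cases j <;> simp_all
  · intro i j hij
    fin_cases i <;> fin_cases j <;> simp_all

namespace SimpleGraph

def restrict (G : SimpleGraph V) (s : Finset V) : SimpleGraph V where
  Adj a b := G.Adj a b ∧ a ∈ s ∧ b ∈ s
  symm := ⟨fun _ _ h => ⟨h.1.symm, h.2.2, h.2.1⟩⟩
  loopless := ⟨fun a h => G.loopless.irrefl a h.1⟩

section

variable {G : SimpleGraph V} {s : Finset V}

@[simp] lemma restrict_adj {a b : V} : (G.restrict s).Adj a b ↔ G.Adj a b ∧ a ∈ s ∧ b ∈ s :=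
  Iff.rfl

lemma restrict_le : G.restrict s ≤ G := fun _ _ h => h.1

variable [Fintype V] [DecidableRel G.Adj]

lemma degree_eq_zero_of_notMem (hs : ∀ a b, G.Adj a b → a ∈ s) {v : V} (hv : v ∉ s) :
    G.degree v = 0 := by
  rw [← card_neighborFinset_eq_degree, card_eq_zero]
  exact eq_empty_of_forall_notMem fun w hw => hv (hs v w ((mem_neighborFinset _ _ _).1 hw))

lemma two_mul_card_edgeFinset_le (hs : ∀ a b, G.Adj a b → a ∈ s) {D : ℕ}
    (hD : ∀ v ∈ s, G.degree v ≤ D) : 2 * #G.edgeFinset ≤ #s * D := by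
  rw [← sum_degrees_eq_twice_card_edges, ← sum_subset (subset_univ s)]
  · exact sum_le_card_nsmul s _ D hD
  · exact fun v _ hv => degree_eq_zero_of_notMem hs hv

variable [DecidableEq V]

instance : DecidableRel (G.restrict s).Adj :=
  fun a b => inferInstanceAs (Decidable (G.Adj a b ∧ a ∈ s ∧ b ∈ s))

lemma degree_le_card_sub_one (hs : ∀ a b, G.Adj a b → a ∈ s) (v : V) :
    G.degree v ≤ #s - 1 := by
  by_cases hv : v ∈ s
  · rw [← card_neighborFinset_eq_degree, ← card_erase_of_mem hv]
    refine card_le_card fun w hw => ?_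
    rw [mem_neighborFinset] at hw
    exact mem_erase.2 ⟨hw.ne', hs w v hw.symm⟩
  · rw [degree_eq_zero_of_notMem hs hv]
    exact Nat.zero_le _

lemma card_edgeFinset_eq_restrict_add_restrict_compl (hs : ∀ a b, a ∈ s → G.Adj a b → b ∈ s) :
    #G.edgeFinset = #(G.restrict s).edgeFinset + #(G.restrict sᶜ).edgeFinset := by
  rw [← card_union_of_disjoint ?_]
  · congr 1
    ext e
    induction e using Sym2.ind with
    | _ a b =>
      simp only [mem_union, mem_edgeFinset, mem_edgeSet, restrict_adj, mem_compl]
      have := hs a b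
      have := hs b a
      have := fun h : G.Adj a b => h.symm
      tauto
  · rw [Finset.disjoint_left]
    intro e
    induction e using Sym2.ind with
    | _ a b =>
      simp only [mem_edgeFinset, mem_edgeSet, restrict_adj, mem_compl]
      tauto

lemma card_edgeFinset_le_pathFiveBound_of_card_le_four (hs : ∀ a b, G.Adj a b → a ∈ s)
    (h4 : #s ≤ 4) : #G.edgeFinset ≤ pathFiveBound #s := by
  have := two_mul_card_edgeFinset_le hs fun v _ => degree_le_card_sub_one hs v
  rw [pathFiveBound_of_le_four h4]
  omega

lemma card_edgeFinset_le_pathFiveBound_of_degree_le_two (hs : ∀ a b, G.Adj a b → a ∈ s)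
    (h2 : ∀ v, G.degree v ≤ 2) : #G.edgeFinset ≤ pathFiveBound #s := by
  by_cases h4 : #s ≤ 4
  · exact card_edgeFinset_le_pathFiveBound_of_card_le_four hs h4
  · have := two_mul_card_edgeFinset_le hs fun v _ => h2 v
    have := le_pathFiveBound (n := #s) (by omega)
    omega

end

section

variable [Fintype V] [DecidableEq V] (G : SimpleGraph V) [DecidableRel G.Adj]

def secondNeighborFinset (v : V) : Finset V :=
  {p | p ≠ v ∧ ¬ G.Adj v p ∧ ∃ u, G.Adj v u ∧ G.Adj u p}

def ballTwo (v : V) : Finset V :=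
  insert v (G.neighborFinset v ∪ G.secondNeighborFinset v)

variable {G} {v p u w x y : V}

lemma mem_secondNeighborFinset :
    p ∈ G.secondNeighborFinset v ↔ p ≠ v ∧ ¬ G.Adj v p ∧ ∃ u, G.Adj v u ∧ G.Adj u p := by
  simp [secondNeighborFinset]

lemma mem_ballTwo : w ∈ G.ballTwo v ↔ w = v ∨ G.Adj v w ∨ w ∈ G.secondNeighborFinset v := by
  simp [ballTwo]

lemma card_ballTwo : #(G.ballTwo v) = 1 + G.degree v + #(G.secondNeighborFinset v) := by
  rw [ballTwo, card_insert_of_notMem, card_union_of_disjoint, card_neighborFinset_eq_degree]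
  · ring
  · exact Finset.disjoint_left.2 fun w hw hw' =>
      (mem_secondNeighborFinset.1 hw').2.1 ((mem_neighborFinset _ _ _).1 hw)
  · simp [mem_secondNeighborFinset]

lemma exists_adj_notMem (t : Finset V) (ht : #t < G.degree v) : ∃ q, G.Adj v q ∧ q ∉ t := by
  have := le_card_sdiff t (G.neighborFinset v)
  rw [card_neighborFinset_eq_degree] at this
  obtain ⟨q, hq⟩ := card_pos.1 (show 0 < #(G.neighborFinset v \ t) by omega)
  rw [mem_sdiff, mem_neighborFinset] at hq
  exact ⟨q, hq⟩

lemma eq_of_adj_of_mem_secondNeighborFinset (hG : ¬ ContainsPath 5 G) (hv : 3 ≤ G.degree v)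
    (hp : p ∈ G.secondNeighborFinset v) (hvu : G.Adj v u) (hup : G.Adj u p) (hpw : G.Adj p w) :
    w = u := by
  obtain ⟨hpv, hvp, -⟩ := mem_secondNeighborFinset.1 hp
  by_contra hwu
  obtain ⟨q, hvq, hq⟩ := exists_adj_notMem {u, w} (card_le_two.trans_lt hv)
  simp only [mem_insert, mem_singleton, not_or] at hq
  exact hG <| containsPath_five_of_adj hpw.symm hup.symm hvu.symm hvq hwu
    (by rintro rfl; exact hvp hpw.symm) (Ne.symm hq.2) hpv (by rintro rfl; exact hvp hvq)
    (Ne.symm hq.1)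

lemma mem_ballTwo_of_adj (hG : ¬ ContainsPath 5 G) (hv : 3 ≤ G.degree v)
    (hx : x ∈ G.ballTwo v) (hxy : G.Adj x y) : y ∈ G.ballTwo v := by
  rw [mem_ballTwo] at hx ⊢
  rcases hx with rfl | hvx | hx
  · exact Or.inr (Or.inl hxy)
  · by_cases hyv : y = v
    · exact Or.inl hyv
    by_cases hvy : G.Adj v y
    · exact Or.inr (Or.inl hvy)
    exact Or.inr (Or.inr (mem_secondNeighborFinset.2 ⟨hyv, hvy, x, hvx, hxy⟩))
  · obtain ⟨-, -, u, hvu, hux⟩ := mem_secondNeighborFinset.1 hx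
    rw [eq_of_adj_of_mem_secondNeighborFinset hG hv hx hvu hux hxy]
    exact Or.inr (Or.inl hvu)

lemma not_adj_of_mem_secondNeighborFinset (hG : ¬ ContainsPath 5 G) (hv : 3 ≤ G.degree v)
    (hp : p ∈ G.secondNeighborFinset v) (hvx : G.Adj v x) (hvy : G.Adj v y) : ¬ G.Adj x y := by
  obtain ⟨hpv, hvp, u, hvu, hup⟩ := mem_secondNeighborFinset.1 hp
  have hne {z} (hvz : G.Adj v z) : p ≠ z := by rintro rfl; exact hvp hvz
  have hend {x y} (hvx : G.Adj v x) (hvy : G.Adj v y) (hxy : G.Adj x y) (hxp : G.Adj x p) :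
      False := by
    obtain ⟨q, hvq, hq⟩ := exists_adj_notMem {x, y} (card_le_two.trans_lt hv)
    simp only [mem_insert, mem_singleton, not_or] at hq
    exact hG <| containsPath_five_of_adj hxp.symm hxy hvy.symm hvq (hne hvy) hpv (hne hvq)
      hvx.ne' (Ne.symm hq.1) (Ne.symm hq.2)
  intro hxy
  by_cases hux : u = x
  · exact hend hvx hvy hxy (hux ▸ hup)
  by_cases huy : u = y
  · exact hend hvy hvx hxy.symm (huy ▸ hup)
  exact hG <| containsPath_five_of_adj hup.symm hvu.symm hvx hxy hpv (hne hvx) (hne hvy)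
    hux huy hvy.ne

lemma eq_or_eq_of_adj_of_adj (hG : ¬ ContainsPath 5 G) (hv : 4 ≤ G.degree v)
    {z w : V} (hvx : G.Adj v x) (hvy : G.Adj v y) (hvz : G.Adj v z) (hvw : G.Adj v w)
    (hxy : G.Adj x y) (hzw : G.Adj z w) : z = x ∨ z = y := by
  by_contra! hz
  have hchain {a b} (hva : G.Adj v a) (hvb : G.Adj v b) (hab : G.Adj a b) (hza : G.Adj z a)
      (hzb : z ≠ b) : False := by
    obtain ⟨q, hvq, hq⟩ := exists_adj_notMem {z, a, b} (card_le_three.trans_lt hv)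
    simp only [mem_insert, mem_singleton, not_or] at hq
    exact hG <| containsPath_five_of_adj hza hab hvb.symm hvq hzb hvz.ne' (Ne.symm hq.1)
      hva.ne' (Ne.symm hq.2.1) (Ne.symm hq.2.2)
  by_cases hwx : w = x
  · exact hchain hvx hvy hxy (hwx ▸ hzw) hz.2
  by_cases hwy : w = y
  · exact hchain hvy hvx hxy.symm (hwy ▸ hzw) hz.1
  exact hG <| containsPath_five_of_adj hxy.symm hvx.symm hvz hzw hvy.ne' (Ne.symm hz.2)
    (Ne.symm hwy) (Ne.symm hz.1) (Ne.symm hwx) hvw.ne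

lemma card_edgeFinset_restrict_neighborFinset_le_one (hG : ¬ ContainsPath 5 G)
    (hv : 4 ≤ G.degree v) : #(G.restrict (G.neighborFinset v)).edgeFinset ≤ 1 := by
  refine card_le_one.2 fun e he f hf => ?_
  induction e using Sym2.ind with | _ x y => ?_
  induction f using Sym2.ind with | _ z w => ?_
  simp only [mem_edgeFinset, mem_edgeSet, restrict_adj, mem_neighborFinset] at he hf
  obtain ⟨hxy, hvx, hvy⟩ := he
  obtain ⟨hzw, hvz, hvw⟩ := hf
  have hz := eq_or_eq_of_adj_of_adj hG hv hvx hvy hvz hvw hxy hzw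
  have hw := eq_or_eq_of_adj_of_adj hG hv hvx hvy hvw hvz hxy hzw.symm
  have := hxy.ne
  have := hzw.ne
  rw [Sym2.eq_iff]
  rcases hz with rfl | rfl <;> rcases hw with rfl | rfl <;> simp_all

lemma card_edgeFinset_restrict_ballTwo_le (hG : ¬ ContainsPath 5 G) (hv : 3 ≤ G.degree v)
    (h5 : 5 ≤ #(G.ballTwo v)) : #(G.restrict (G.ballTwo v)).edgeFinset ≤ #(G.ballTwo v) := by
  set P := G.secondNeighborFinset v
  set N := G.neighborFinset v
  have hcard : #(G.ballTwo v) = 1 + G.degree v + #P := card_ballTwo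
  have hcover : (G.restrict (G.ballTwo v)).edgeFinset ⊆
      G.incidenceFinset v ∪ P.biUnion (G.incidenceFinset ·) ∪ (G.restrict N).edgeFinset := by
    intro e he
    induction e using Sym2.ind with | _ x y => ?_
    simp only [mem_edgeFinset, mem_edgeSet, restrict_adj, mem_ballTwo] at he
    simp only [mem_union, mem_biUnion, mem_incidenceFinset, mem_edgeFinset,
      mem_edgeSet, restrict_adj, N, mem_neighborFinset]
    obtain ⟨hxy, hx, hy⟩ := he
    rcases hx with rfl | hvx | hx
    · exact Or.inl (Or.inl ((G.mk'_mem_incidenceSet_left_iff).2 hxy))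
    rcases hy with rfl | hvy | hy
    · exact Or.inl (Or.inl ((G.mk'_mem_incidenceSet_right_iff).2 hxy))
    · exact Or.inr ⟨hxy, hvx, hvy⟩
    · exact Or.inl (Or.inr ⟨y, hy, (G.mk'_mem_incidenceSet_right_iff).2 hxy⟩)
    · exact Or.inl (Or.inr ⟨x, hx, (G.mk'_mem_incidenceSet_left_iff).2 hxy⟩)
  have hleaf : ∀ p ∈ P, #(G.incidenceFinset p) ≤ 1 := fun p hp => by
    obtain ⟨-, -, u, hvu, hup⟩ := mem_secondNeighborFinset.1 hp
    rw [card_incidenceFinset_eq_degree, ← card_neighborFinset_eq_degree, card_le_one]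
    intro w hw w' hw'
    rw [mem_neighborFinset] at hw hw'
    rw [eq_of_adj_of_mem_secondNeighborFinset hG hv hp hvu hup hw,
      eq_of_adj_of_mem_secondNeighborFinset hG hv hp hvu hup hw']
  have hinner : #(G.restrict N).edgeFinset ≤ 1 := by
    rcases P.eq_empty_or_nonempty with hP | ⟨p, hp⟩
    · rw [hcard, hP, card_empty] at h5
      exact card_edgeFinset_restrict_neighborFinset_le_one hG (by omega)
    · refine card_le_one.2 fun e he _ _ => ?_
      induction e using Sym2.ind with | _ x y => ?_
      simp only [mem_edgeFinset, mem_edgeSet, restrict_adj, N, mem_neighborFinset] at he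
      exact absurd he.1 (not_adj_of_mem_secondNeighborFinset hG hv hp he.2.1 he.2.2)
  calc #(G.restrict (G.ballTwo v)).edgeFinset
      ≤ #(G.incidenceFinset v) + ∑ p ∈ P, #(G.incidenceFinset p) + 1 :=
        (card_le_card hcover).trans <| (card_union_le _ _).trans <|
          add_le_add ((card_union_le _ _).trans (add_le_add le_rfl card_biUnion_le)) hinner
    _ ≤ G.degree v + #P + 1 := by
        rw [card_incidenceFinset_eq_degree]
        gcongr
        simpa using sum_le_sum hleaf
    _ = #(G.ballTwo v) := by rw [hcard]; ring

end

variable [Fintype V] [DecidableEq V]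

lemma card_edgeFinset_restrict_ballTwo_le_pathFiveBound {G : SimpleGraph V} [DecidableRel G.Adj]
    (hG : ¬ ContainsPath 5 G) {v : V} (hv : 3 ≤ G.degree v) :
    #(G.restrict (G.ballTwo v)).edgeFinset ≤ pathFiveBound #(G.ballTwo v) := by
  by_cases h4 : #(G.ballTwo v) ≤ 4
  · exact card_edgeFinset_le_pathFiveBound_of_card_le_four (fun _ _ h => h.2.1) h4
  · exact (card_edgeFinset_restrict_ballTwo_le hG hv (by omega)).trans
      (le_pathFiveBound (by omega))

theorem card_edgeFinset_le_pathFiveBound (s : Finset V) (G : SimpleGraph V) [DecidableRel G.Adj]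
    (hG : ¬ ContainsPath 5 G) (hs : ∀ a b, G.Adj a b → a ∈ s) :
    #G.edgeFinset ≤ pathFiveBound #s := by
  induction s using Finset.strongInduction generalizing G with | _ s ih => ?_
  by_cases hdeg : ∀ v, G.degree v ≤ 2
  · exact card_edgeFinset_le_pathFiveBound_of_degree_le_two hs hdeg
  obtain ⟨v, hv⟩ : ∃ v, 3 ≤ G.degree v :=
    (not_forall.1 hdeg).imp fun _ => Nat.lt_of_not_le
  set S := G.ballTwo v
  have hSs : S ⊆ s := fun w hw => by
    rcases mem_ballTwo.1 hw with rfl | hvw | hw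
    · obtain ⟨u, hwu⟩ := (G.degree_pos_iff_exists_adj w).1 (by omega)
      exact hs w u hwu
    · exact hs w v hvw.symm
    · obtain ⟨-, -, u, -, huw⟩ := mem_secondNeighborFinset.1 hw
      exact hs w u huw.symm
  have houter : #(G.restrict Sᶜ).edgeFinset ≤ pathFiveBound #(s \ S) :=
    ih (s \ S) (sdiff_ssubset hSs (insert_nonempty _ _)) (G.restrict Sᶜ)
      (fun h => hG (h.mono restrict_le))
      (fun a b hab => mem_sdiff.2 ⟨hs a b hab.1, mem_compl.1 hab.2.1⟩)
  calc #G.edgeFinset = #(G.restrict S).edgeFinset + #(G.restrict Sᶜ).edgeFinset :=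
        card_edgeFinset_eq_restrict_add_restrict_compl fun _ _ => mem_ballTwo_of_adj hG hv
    _ ≤ pathFiveBound #S + pathFiveBound #(s \ S) :=
        add_le_add (card_edgeFinset_restrict_ballTwo_le_pathFiveBound hG hv) houter
    _ ≤ pathFiveBound #s := by
        rw [← card_sdiff_add_card_eq_card hSs, add_comm #(s \ S)]
        exact pathFiveBound_add_le _ _

end SimpleGraph

lemma ncard_edgeSet_le_pathFiveBound {n : ℕ} {G : SimpleGraph (Fin n)} (hG : ¬ ContainsPath 5 G) :
    G.edgeSet.ncard ≤ pathFiveBound n := by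
  classical
  rw [← coe_edgeFinset, Set.ncard_coe_finset]
  simpa using card_edgeFinset_le_pathFiveBound univ G hG (fun _ _ _ => mem_univ _)

def blockCliques (n : ℕ) : SimpleGraph (Fin n) where
  Adj x y := x ≠ y ∧ (x : ℕ) / 4 = (y : ℕ) / 4
  symm := ⟨fun _ _ h => ⟨h.1.symm, h.2.symm⟩⟩
  loopless := ⟨fun _ h => h.1 rfl⟩

@[simp] lemma blockCliques_adj {n : ℕ} {x y : Fin n} :
    (blockCliques n).Adj x y ↔ x ≠ y ∧ (x : ℕ) / 4 = (y : ℕ) / 4 :=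
  Iff.rfl

instance (n : ℕ) : DecidableRel (blockCliques n).Adj :=
  fun x y => inferInstanceAs (Decidable (x ≠ y ∧ (x : ℕ) / 4 = (y : ℕ) / 4))

lemma not_containsPath_five_blockCliques (n : ℕ) : ¬ ContainsPath 5 (blockCliques n) := by
  rintro ⟨f, hf, hadj⟩
  have h01 := (hadj 0 1 rfl).2
  have h12 := (hadj 1 2 rfl).2
  have h23 := (hadj 2 3 rfl).2
  have h34 := (hadj 3 4 rfl).2
  have hblock : ∀ i, (f i : ℕ) / 4 = (f 0 : ℕ) / 4 := by
    intro i
    fin_cases i <;> simp only [Fin.zero_eta, Fin.mk_one, Fin.reduceFinMk] <;> omega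
  -- a path stays inside one block, so its vertices are told apart by their residues mod 4
  have hmod : Function.Injective fun i =>
      (⟨(f i : ℕ) % 4, Nat.mod_lt _ (by norm_num)⟩ : Fin 4) := by
    intro i j hij
    have := hblock i
    have := hblock j
    simp only [Fin.mk.injEq] at hij
    exact hf (Fin.ext (by omega))
  simpa using Fintype.card_le_of_injective _ hmod

lemma degree_blockCliques {n : ℕ} (x : Fin n) :
    (blockCliques n).degree x = min (4 * ((x : ℕ) / 4) + 4) n - 4 * ((x : ℕ) / 4) - 1 := by
  have hnbr : (blockCliques n).neighborFinset x =
      ({y | (y : ℕ) / 4 = (x : ℕ) / 4} : Finset (Fin n)).erase x := by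
    ext y
    simp [eq_comm]
  have hblock : ({y | (y : ℕ) / 4 = (x : ℕ) / 4} : Finset (Fin n)).map Fin.valEmbedding =
      Ico (4 * ((x : ℕ) / 4)) (min (4 * ((x : ℕ) / 4) + 4) n) := by
    ext m
    simp only [mem_map, mem_filter, mem_univ, true_and, Fin.valEmbedding_apply, mem_Ico]
    constructor
    · rintro ⟨y, hy, rfl⟩
      have := y.isLt
      omega
    · intro hm
      exact ⟨⟨m, by omega⟩, by dsimp only; omega, rfl⟩
  rw [← card_neighborFinset_eq_degree, hnbr, card_erase_of_mem (by simp), ← card_map,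
    hblock, Nat.card_Ico]

lemma card_edgeFinset_blockCliques (n : ℕ) :
    #(blockCliques n).edgeFinset = pathFiveBound n := by
  obtain ⟨a, b, hb, rfl⟩ : ∃ a b, b < 4 ∧ n = 4 * a + b :=
    ⟨n / 4, n % 4, Nat.mod_lt _ (by norm_num), (Nat.div_add_mod n 4).symm⟩
  have hsum := (blockCliques (4 * a + b)).sum_degrees_eq_twice_card_edges
  simp only [degree_blockCliques] at hsum
  rw [Fin.sum_univ_eq_sum_range (fun m => min (4 * (m / 4) + 4) (4 * a + b) - 4 * (m / 4) - 1),
    sum_range_add] at hsum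
  have hfull : ∑ m ∈ range (4 * a), (min (4 * (m / 4) + 4) (4 * a + b) - 4 * (m / 4) - 1) =
      4 * a * 3 := by
    rw [sum_congr rfl (g := fun _ => 3) fun m hm => by rw [mem_range] at hm; omega]
    simp
  have hlast : ∑ j ∈ range b,
      (min (4 * ((4 * a + j) / 4) + 4) (4 * a + b) - 4 * ((4 * a + j) / 4) - 1) = b * (b - 1) := by
    rw [sum_congr rfl (g := fun _ => b - 1) fun j hj => by rw [mem_range] at hj; omega]
    simp
  rw [pathFiveBound_four_mul_add a hb]
  omega

lemma exPath_five (n : ℕ) : exPath 5 n = pathFiveBound n := by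
  refine IsGreatest.csSup_eq ⟨⟨blockCliques n, not_containsPath_five_blockCliques n, ?_⟩, ?_⟩
  · rw [← coe_edgeFinset, Set.ncard_coe_finset, card_edgeFinset_blockCliques]
  · rintro m ⟨G, hG, rfl⟩
    exact ncard_edgeSet_le_pathFiveBound hG

/-- Theorem 2.1 (Faudree–Schelp), value: `ex(4a + b, P₅) = 6a + b(b-1)/2` for `0 ≤ b ≤ 3`. -/
theorem turan_number_P5 (a b : ℕ) (hb : b ≤ 3) :
    exPath 5 (4 * a + b) = 6 * a + b * (b - 1) / 2 := by
  rw [exPath_five, pathFiveBound_four_mul_add a (by omega)]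
end

section
/- Let n = 4a + b, where a ≥ 0 and 0 ≤ b ≤ 3 are integers. If G is a graph on n vertices with exactly 6a + b(b−1)/2 edges containing no copy of P_5 as a subgraph, then G is isomorphic to the disjoint union of a copies of K_4 together with one copy of K_b (i.e., aK_4 ∪ K_b is the unique extremal P_5-free graph on n vertices). -/
/-- The graph `aK₄ ∪ K_b` on `4a + b` vertices: `a` disjoint copies of `K₄` on the
consecutive blocks of four vertices, together with a clique on the last `b` vertices. -/
def cliquesK4Kb (a b : ℕ) : SimpleGraph (Fin (4 * a + b)) :=
  SimpleGraph.fromRel (fun x y =>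
    ((x : ℕ) / 4 = (y : ℕ) / 4 ∧ (x : ℕ) < 4 * a ∧ (y : ℕ) < 4 * a) ∨
    (4 * a ≤ (x : ℕ) ∧ 4 * a ≤ (y : ℕ)))

/-!
A connected `P₅`-free graph on `m ≥ 5` vertices has at most `m` edges: along a longest path
(a `P₄`, or a `P₃` if there is none) one finds two adjacent vertices that meet every edge and
have at most one common neighbour. A component on `m ≤ 4` vertices has at most `m(m-1)/2`
edges. Splitting off one component at a time, the bound `6q + r(r-1)/2` for `n = 4q + r`
follows by induction, and it is attained only if every split-off component is a `K₄` or the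
`K_b`. Induction on `n` then assembles the isomorphism with `aK₄ ∪ K_b`.
-/

open Finset SimpleGraph

section Counting

def exP5 (n : ℕ) : ℕ := 6 * (n / 4) + n % 4 * (n % 4 - 1) / 2

def exP5Connected (m : ℕ) : ℕ := if m ≤ 4 then m * (m - 1) / 2 else m

lemma exP5_four_mul_add {a b : ℕ} (hb : b < 4) :
    exP5 (4 * a + b) = 6 * a + b * (b - 1) / 2 := by
  have hdiv : (4 * a + b) / 4 = a := by omega
  have hmod : (4 * a + b) % 4 = b := by omega
  rw [exP5, hdiv, hmod]

lemma exists_eq_four_mul_add (n : ℕ) : ∃ q r, r < 4 ∧ n = 4 * q + r :=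
  ⟨n / 4, n % 4, Nat.mod_lt _ (by norm_num), (Nat.div_add_mod n 4).symm⟩

lemma exP5Connected_add_exP5_sub_le {m n : ℕ} (hm : 1 ≤ m) (hmn : m ≤ n) :
    exP5Connected m + exP5 (n - m) ≤ exP5 n := by
  obtain ⟨a, b, hb, rfl⟩ := exists_eq_four_mul_add n
  obtain ⟨q, r, hr, hqr⟩ := exists_eq_four_mul_add (4 * a + b - m)
  rw [hqr, exP5_four_mul_add hr, exP5_four_mul_add hb, exP5Connected]
  split_ifs <;> interval_cases b <;> interval_cases r <;> try interval_cases m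
  all_goals omega

lemma eq_four_or_eq_of_exP5Connected_add_exP5_sub_eq {a b m : ℕ} (hb : b < 4) (hm : 1 ≤ m)
    (hmn : m ≤ 4 * a + b)
    (heq : exP5Connected m + exP5 (4 * a + b - m) = 6 * a + b * (b - 1) / 2) :
    m = 4 ∨ m = b := by
  obtain ⟨q, r, hr, hqr⟩ := exists_eq_four_mul_add (4 * a + b - m)
  rw [hqr, exP5_four_mul_add hr, exP5Connected] at heq
  split_ifs at heq <;> interval_cases b <;> interval_cases r <;> try interval_cases m
  all_goals omega

end Counting

section Paths

variable {V W : Type*} {G : SimpleGraph V} {H : SimpleGraph W}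

lemma ContainsPath.map_s9 {t : ℕ} (f : G ↪g H) (h : ContainsPath t G) : ContainsPath t H := by
  obtain ⟨p, hinj, hadj⟩ := h
  exact ⟨f ∘ p, f.injective.comp hinj, fun i j hij => f.map_rel_iff.2 (hadj i j hij)⟩

lemma not_containsPath_induce {t : ℕ} (h : ¬ ContainsPath t G) (S : Set V) :
    ¬ ContainsPath t (G.induce S) :=
  fun hS => h (hS.map_s9 (Embedding.induce S))

lemma containsPath_four {v₀ v₁ v₂ v₃ : V} (h₀₁ : G.Adj v₀ v₁) (h₁₂ : G.Adj v₁ v₂)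
    (h₂₃ : G.Adj v₂ v₃) (h₀₂ : v₀ ≠ v₂) (h₀₃ : v₀ ≠ v₃) (h₁₃ : v₁ ≠ v₃) : ContainsPath 4 G := by
  have := h₀₁.ne; have := h₁₂.ne; have := h₂₃.ne
  refine ⟨![v₀, v₁, v₂, v₃], fun i j hij => ?_, fun i j hij => ?_⟩ <;>
    fin_cases i <;> fin_cases j <;> simp_all [eq_comm]

lemma containsPath_five {v₀ v₁ v₂ v₃ v₄ : V} (h₀₁ : G.Adj v₀ v₁) (h₁₂ : G.Adj v₁ v₂)
    (h₂₃ : G.Adj v₂ v₃) (h₃₄ : G.Adj v₃ v₄) (h₀₂ : v₀ ≠ v₂) (h₀₃ : v₀ ≠ v₃) (h₀₄ : v₀ ≠ v₄)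
    (h₁₃ : v₁ ≠ v₃) (h₁₄ : v₁ ≠ v₄) (h₂₄ : v₂ ≠ v₄) : ContainsPath 5 G := by
  have := h₀₁.ne; have := h₁₂.ne; have := h₂₃.ne; have := h₃₄.ne
  refine ⟨![v₀, v₁, v₂, v₃, v₄], fun i j hij => ?_, fun i j hij => ?_⟩ <;>
    fin_cases i <;> fin_cases j <;> simp_all [eq_comm]

end Paths

namespace SimpleGraph

variable {V W : Type*} {G : SimpleGraph V} {H : SimpleGraph W}

noncomputable def Iso.sumInduceCompl (S : Set V) (hS : ∀ ⦃u v⦄, G.Adj u v → u ∈ S → v ∈ S) :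
    G.induce S ⊕g G.induce Sᶜ ≃g G where
  toEquiv := by classical exact Equiv.Set.sumCompl S
  map_rel_iff' {u v} := by
    rcases u with ⟨u, hu⟩ | ⟨u, hu⟩ <;> rcases v with ⟨v, hv⟩ | ⟨v, hv⟩ <;>
      simp only [Equiv.Set.sumCompl_apply_inl, Equiv.Set.sumCompl_apply_inr, sum_adj,
        comap_adj, Function.Embedding.subtype_apply, iff_false, iff_self]
    · exact fun h => hv (hS h hu)
    · exact fun h => hu (hS h.symm hv)

lemma ncard_edgeSet_sum [Finite V] [Finite W] :
    (G ⊕g H).edgeSet.ncard = G.edgeSet.ncard + H.edgeSet.ncard := by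
  simp only [← Nat.card_coe_set_eq, Nat.card_congr edgeSetSumEquiv, Nat.card_sum]

lemma Iso.ncard_edgeSet_eq (f : G ≃g H) : G.edgeSet.ncard = H.edgeSet.ncard := by
  simp only [← Nat.card_coe_set_eq]
  exact Nat.card_congr f.mapEdgeSet

namespace Preconnected

theorem exists_adj_of_mem_of_notMem (hconn : G.Preconnected) {S : Set V} {a b : V}
    (ha : a ∈ S) (hb : b ∉ S) : ∃ u ∈ S, ∃ v ∉ S, G.Adj u v := by
  obtain ⟨d, -, hd₁, hd₂⟩ := (hconn a b).some.exists_boundary_dart S ha hb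
  exact ⟨_, hd₁, _, hd₂, d.adj⟩

theorem exists_adj_adj_mem (hconn : G.Preconnected) {S : Set V} {x p q : V}
    (hx : x ∈ S) (hp : p ∉ S) (hq : q ∉ S) (hpq : G.Adj p q) :
    ∃ y' y z, y' ∉ S ∧ y ∉ S ∧ z ∈ S ∧ G.Adj y' y ∧ G.Adj y z := by
  -- Leave the set of outside vertices with an outside neighbour: the crossing edge ends in `S`.
  obtain ⟨y, ⟨hy, y', hy', hyy'⟩, z, hz, hyz⟩ :=
    hconn.exists_adj_of_mem_of_notMem (S := {v | v ∉ S ∧ ∃ w ∉ S, G.Adj v w})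
      ⟨hp, q, hq, hpq⟩ (fun h => h.1 hx)
  refine ⟨y', y, z, hy', hy, ?_, hyy'.symm, hyz⟩
  by_contra hzS
  exact hz ⟨hzS, y, hy, hyz.symm⟩

theorem exists_pathThree [Fintype V] (hconn : G.Preconnected) (hcard : 3 ≤ Fintype.card V) :
    ∃ x₁ x₂ x₃, G.Adj x₁ x₂ ∧ G.Adj x₂ x₃ ∧ x₁ ≠ x₃ := by
  classical
  obtain ⟨v⟩ : Nonempty V := Fintype.card_pos_iff.1 (by omega)
  obtain ⟨z, -, hz⟩ := exists_mem_notMem_of_card_lt_card (s := {v}) (t := univ)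
    (by rw [card_singleton, card_univ]; omega)
  obtain ⟨u, rfl, w, -, huw⟩ := hconn.exists_adj_of_mem_of_notMem (S := {v}) rfl
    (by simpa using hz)
  obtain ⟨t, -, ht⟩ := exists_mem_notMem_of_card_lt_card (s := {u, w}) (t := univ)
    (card_le_two.trans_lt (by rw [card_univ]; omega))
  obtain ⟨s, hs, r, hr, hsr⟩ := hconn.exists_adj_of_mem_of_notMem (S := {u, w}) (a := u)
    (by simp) (by simpa using ht)
  simp only [Set.mem_insert_iff, Set.mem_singleton_iff, not_or] at hs hr
  rcases hs with rfl | rfl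
  · exact ⟨r, s, w, hsr.symm, huw, hr.2⟩
  · exact ⟨u, s, r, huw, hsr, Ne.symm hr.1⟩

end Preconnected

lemma ncard_edgeSet_eq_card_edgeFinset [Fintype G.edgeSet] : G.edgeSet.ncard = #G.edgeFinset := by
  rw [← coe_edgeFinset, Set.ncard_coe_finset]

theorem card_edgeFinset_le_card_of_forall_adj [Fintype V] [DecidableEq V] [DecidableRel G.Adj]
    {u w : V} (huw : G.Adj u w)
    (hcover : ∀ p q, G.Adj p q → p = u ∨ p = w ∨ q = u ∨ q = w)
    (hcommon : (G.neighborSet u ∩ G.neighborSet w).Subsingleton) :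
    #G.edgeFinset ≤ Fintype.card V := by
  -- `#E ≤ deg u + deg w - 1` since only the edge `uw` is counted twice, and
  -- `deg u + deg w ≤ |V| + 1` since `u` and `w` share at most one neighbour.
  have hE : G.edgeFinset ⊆ G.incidenceFinset u ∪ G.incidenceFinset w := by
    intro e he
    induction e using Sym2.ind with
    | h p q =>
      rw [mem_edgeFinset, mem_edgeSet] at he
      simp only [mem_union, mem_incidenceFinset, mk'_mem_incidenceSet_iff]
      grind
  have hinc : #(G.incidenceFinset u ∩ G.incidenceFinset w) = 1 := by
    rw [card_eq_one]
    exact ⟨s(u, w), coe_injective (by simpa using G.incidenceSet_inter_incidenceSet_of_adj huw)⟩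
  have hnbr : #(G.neighborFinset u ∩ G.neighborFinset w) ≤ 1 :=
    card_le_one.2 fun a ha b hb => hcommon (by simpa using ha) (by simpa using hb)
  have hdeg := card_union_add_card_inter (G.neighborFinset u) (G.neighborFinset w)
  have hinc' := card_union_add_card_inter (G.incidenceFinset u) (G.incidenceFinset w)
  rw [card_neighborFinset_eq_degree, card_neighborFinset_eq_degree] at hdeg
  rw [card_incidenceFinset_eq_degree, card_incidenceFinset_eq_degree] at hinc'
  have := card_le_card hE
  have := card_le_univ (G.neighborFinset u ∪ G.neighborFinset w)
  omega

-- Distinctness of consecutive vertices is implied by adjacency.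
structure IsPathFour (G : SimpleGraph V) (x₁ x₂ x₃ x₄ : V) : Prop where
  adj₁₂ : G.Adj x₁ x₂
  adj₂₃ : G.Adj x₂ x₃
  adj₃₄ : G.Adj x₃ x₄
  ne₁₃ : x₁ ≠ x₃
  ne₁₄ : x₁ ≠ x₄
  ne₂₄ : x₂ ≠ x₄

lemma IsPathFour.reverse {x₁ x₂ x₃ x₄ : V} (hP : G.IsPathFour x₁ x₂ x₃ x₄) :
    G.IsPathFour x₄ x₃ x₂ x₁ :=
  ⟨hP.adj₃₄.symm, hP.adj₂₃.symm, hP.adj₁₂.symm, hP.ne₂₄.symm, hP.ne₁₄.symm, hP.ne₁₃.symm⟩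

section PathFour

variable (hfree : ¬ ContainsPath 5 G) {x₁ x₂ x₃ x₄ : V} (hP : G.IsPathFour x₁ x₂ x₃ x₄)
include hfree hP

lemma mem_of_adj_of_pathFour {y : V} (hy : G.Adj x₁ y) : y ∈ ({x₁, x₂, x₃, x₄} : Set V) := by
  have ⟨h₁₂, h₂₃, h₃₄, h₁₃, h₁₄, h₂₄⟩ := hP
  by_contra h
  simp only [Set.mem_insert_iff, Set.mem_singleton_iff, not_or] at h
  exact hfree (containsPath_five hy.symm h₁₂ h₂₃ h₃₄ h.2.1 h.2.2.1 h.2.2.2 h₁₃ h₁₄ h₂₄)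

lemma mem_or_mem_of_adj_of_pathFour (hconn : G.Preconnected) {p q : V} (hpq : G.Adj p q) :
    p ∈ ({x₁, x₂, x₃, x₄} : Set V) ∨ q ∈ ({x₁, x₂, x₃, x₄} : Set V) := by
  have ⟨h₁₂, h₂₃, h₃₄, h₁₃, h₁₄, h₂₄⟩ := hP
  by_contra! h
  obtain ⟨y', y, z, hy', hy, hz, hy'y, hyz⟩ :=
    hconn.exists_adj_adj_mem (x := x₁) (by simp) h.1 h.2 hpq
  simp only [Set.mem_insert_iff, Set.mem_singleton_iff, not_or] at hy hy' hz
  obtain ⟨hy₁, hy₂, hy₃, hy₄⟩ := hy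
  obtain ⟨hy'₁, hy'₂, hy'₃, hy'₄⟩ := hy'
  rcases hz with rfl | rfl | rfl | rfl
  · exact hfree (containsPath_five hyz h₁₂ h₂₃ h₃₄ hy₂ hy₃ hy₄ h₁₃ h₁₄ h₂₄)
  · exact hfree (containsPath_five hy'y hyz h₂₃ h₃₄ hy'₂ hy'₃ hy'₄ hy₃ hy₄ h₂₄)
  · exact hfree (containsPath_five hy'y hyz h₂₃.symm h₁₂.symm hy'₃ hy'₂ hy'₁ hy₂ hy₁ h₁₃.symm)
  · exact hfree (containsPath_five hyz h₃₄.symm h₂₃.symm h₁₂.symm hy₃ hy₂ hy₁ h₂₄.symm h₁₄.symm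
      h₁₃.symm)

variable [Fintype V] (hconn : G.Preconnected) (hcard : 5 ≤ Fintype.card V)
include hconn hcard

lemma exists_adj_notMem_of_pathFour :
    ∃ y ∉ ({x₁, x₂, x₃, x₄} : Set V), G.Adj x₂ y ∨ G.Adj x₃ y := by
  classical
  obtain ⟨z, -, hz⟩ := exists_mem_notMem_of_card_lt_card (s := {x₁, x₂, x₃, x₄}) (t := univ)
    (card_le_four.trans_lt (by rwa [card_univ]))
  obtain ⟨u, hu, v, hv, huv⟩ := hconn.exists_adj_of_mem_of_notMem (S := {x₁, x₂, x₃, x₄})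
    (a := x₁) (by simp) (by simpa using hz)
  refine ⟨v, hv, ?_⟩
  have hx₁ := mem_of_adj_of_pathFour hfree hP (y := v)
  have hx₄ := mem_of_adj_of_pathFour hfree hP.reverse (y := v)
  simp only [Set.mem_insert_iff, Set.mem_singleton_iff] at hu hv hx₁ hx₄
  grind

lemma not_adj_of_pathFour : ¬ G.Adj x₁ x₄ := by
  have ⟨h₁₂, h₂₃, h₃₄, h₁₃, h₁₄, h₂₄⟩ := hP
  intro h
  obtain ⟨y, hy, hyP⟩ := exists_adj_notMem_of_pathFour hfree hP hconn hcard
  simp only [Set.mem_insert_iff, Set.mem_singleton_iff, not_or] at hy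
  obtain ⟨hy₁, hy₂, hy₃, hy₄⟩ := hy
  rcases hyP with hyP | hyP
  · exact hfree (containsPath_five hyP.symm h₁₂.symm h h₃₄.symm hy₁ hy₄ hy₃ h₂₄ h₂₃.ne h₁₃)
  · exact hfree (containsPath_five hyP.symm h₃₄ h.symm h₁₂ hy₄ hy₁ hy₂ h₁₃.symm h₂₃.ne.symm
      h₂₄.symm)

variable [DecidableEq V] [DecidableRel G.Adj]

theorem card_edgeFinset_le_of_pathFour_of_adj (h₁₃' : G.Adj x₁ x₃) :
    #G.edgeFinset ≤ Fintype.card V := by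
  have ⟨h₁₂, h₂₃, h₃₄, h₁₃, h₁₄, h₂₄⟩ := hP
  have hx₁ := fun y => mem_of_adj_of_pathFour (y := y) hfree hP
  have hx₂ : ∀ y, G.Adj x₂ y → y ∈ ({x₁, x₂, x₃, x₄} : Set V) := by
    intro y hy
    by_contra h
    simp only [Set.mem_insert_iff, Set.mem_singleton_iff, not_or] at h
    exact hfree (containsPath_five hy.symm h₁₂.symm h₁₃' h₃₄ h.1 h.2.2.1 h.2.2.2 h₂₃.ne h₂₄ h₁₄)
  have hx₄ := fun y => mem_of_adj_of_pathFour (y := y) hfree hP.reverse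
  have hP' := fun p q => mem_or_mem_of_adj_of_pathFour (p := p) (q := q) hfree hP hconn
  have h₁₄' := not_adj_of_pathFour hfree hP hconn hcard
  obtain ⟨y, hy, hyP⟩ := exists_adj_notMem_of_pathFour hfree hP hconn hcard
  have h₂₄' : ¬ G.Adj x₂ x₄ := by
    intro h
    have hy₃ : G.Adj x₃ y := hyP.resolve_left fun h' => hy (hx₂ y h')
    simp only [Set.mem_insert_iff, Set.mem_singleton_iff, not_or] at hy
    exact hfree (containsPath_five hy₃.symm h₃₄ h.symm h₁₂.symm hy.2.2.2 hy.2.1 hy.1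
      h₂₃.ne.symm h₁₃.symm h₁₄.symm)
  simp only [Set.mem_insert_iff, Set.mem_singleton_iff] at hx₁ hx₂ hx₄ hP'
  refine card_edgeFinset_le_card_of_forall_adj h₁₃' (fun p q hpq => ?_) fun a ha b hb => ?_
  · grind [G.irrefl, G.adj_symm]
  · simp only [Set.mem_inter_iff, mem_neighborSet] at ha hb
    grind [G.irrefl, G.adj_symm]

theorem card_edgeFinset_le_of_pathFour : #G.edgeFinset ≤ Fintype.card V := by
  have ⟨h₁₂, h₂₃, h₃₄, h₁₃, h₁₄, h₂₄⟩ := hP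
  by_cases h₁₃' : G.Adj x₁ x₃
  · exact card_edgeFinset_le_of_pathFour_of_adj hfree hP hconn hcard h₁₃'
  by_cases h₂₄' : G.Adj x₂ x₄
  · exact card_edgeFinset_le_of_pathFour_of_adj hfree hP.reverse hconn hcard h₂₄'.symm
  have hx₁ := fun y => mem_of_adj_of_pathFour (y := y) hfree hP
  have hx₄ := fun y => mem_of_adj_of_pathFour (y := y) hfree hP.reverse
  have hP' := fun p q => mem_or_mem_of_adj_of_pathFour (p := p) (q := q) hfree hP hconn
  have h₁₄' := not_adj_of_pathFour hfree hP hconn hcard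
  have hcommon : ∀ y, G.Adj x₂ y → ¬ G.Adj x₃ y := by
    intro y h₂ h₃
    by_cases hy : y ∈ ({x₁, x₂, x₃, x₄} : Set V)
    · simp only [Set.mem_insert_iff, Set.mem_singleton_iff] at hy
      rcases hy with rfl | rfl | rfl | rfl
      exacts [h₁₃' h₃.symm, h₂.ne rfl, h₃.ne rfl, h₂₄' h₂]
    · simp only [Set.mem_insert_iff, Set.mem_singleton_iff, not_or] at hy
      exact hfree (containsPath_five h₁₂ h₂ h₃.symm h₃₄ (Ne.symm hy.1) h₁₃ h₁₄ h₂₃.ne h₂₄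
        hy.2.2.2)
  simp only [Set.mem_insert_iff, Set.mem_singleton_iff] at hx₁ hx₄ hP'
  refine card_edgeFinset_le_card_of_forall_adj h₂₃ (fun p q hpq => ?_) fun a ha b hb => ?_
  · grind [G.irrefl, G.adj_symm]
  · exact (hcommon a ha.1 ha.2).elim

end PathFour

section PathThree

variable (hP4 : ¬ ContainsPath 4 G) {x₁ x₂ x₃ : V} (h₁₂ : G.Adj x₁ x₂) (h₂₃ : G.Adj x₂ x₃)
  (h₁₃ : x₁ ≠ x₃)
include hP4 h₁₂ h₂₃ h₁₃

lemma mem_of_adj_of_pathThree {y : V} (hy : G.Adj x₁ y) : y ∈ ({x₁, x₂, x₃} : Set V) := by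
  by_contra h
  simp only [Set.mem_insert_iff, Set.mem_singleton_iff, not_or] at h
  exact hP4 (containsPath_four hy.symm h₁₂ h₂₃ h.2.1 h.2.2 h₁₃)

lemma mem_or_mem_of_adj_of_pathThree (hconn : G.Preconnected) {p q : V} (hpq : G.Adj p q) :
    p ∈ ({x₁, x₂, x₃} : Set V) ∨ q ∈ ({x₁, x₂, x₃} : Set V) := by
  by_contra! h
  obtain ⟨y', y, z, hy', hy, hz, hy'y, hyz⟩ :=
    hconn.exists_adj_adj_mem (x := x₁) (by simp) h.1 h.2 hpq
  simp only [Set.mem_insert_iff, Set.mem_singleton_iff, not_or] at hy hy' hz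
  rcases hz with rfl | rfl | rfl
  · exact hP4 (containsPath_four hyz h₁₂ h₂₃ hy.2.1 hy.2.2 h₁₃)
  · exact hP4 (containsPath_four hy'y hyz h₁₂.symm hy'.2.1 hy'.1 hy.1)
  · exact hP4 (containsPath_four hyz h₂₃.symm h₁₂.symm hy.2.1 hy.1 h₁₃.symm)

theorem card_edgeFinset_le_of_pathThree [Fintype V] [DecidableEq V] [DecidableRel G.Adj]
    (hconn : G.Preconnected) (hcard : 4 ≤ Fintype.card V) : #G.edgeFinset ≤ Fintype.card V := by
  have hx₁ := fun y => mem_of_adj_of_pathThree (y := y) hP4 h₁₂ h₂₃ h₁₃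
  have hx₃ := fun y => mem_of_adj_of_pathThree (y := y) hP4 h₂₃.symm h₁₂.symm h₁₃.symm
  have hP := fun p q => mem_or_mem_of_adj_of_pathThree (p := p) (q := q) hP4 h₁₂ h₂₃ h₁₃ hconn
  obtain ⟨z, -, hz⟩ := exists_mem_notMem_of_card_lt_card (s := {x₁, x₂, x₃}) (t := univ)
    (card_le_three.trans_lt (by rwa [card_univ]))
  obtain ⟨u, hu, y, hy, huy⟩ := hconn.exists_adj_of_mem_of_notMem (S := {x₁, x₂, x₃})
    (a := x₁) (by simp) (by simpa using hz)
  simp only [Set.mem_insert_iff, Set.mem_singleton_iff] at hx₁ hx₃ hP hu hy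
  have h₁₃' : ¬ G.Adj x₁ x₃ := by
    intro h
    have hy₂ : G.Adj x₂ y := by grind [G.irrefl, G.adj_symm]
    exact hP4 (containsPath_four hy₂.symm h₁₂.symm h (by grind) (by grind) h₂₃.ne)
  refine card_edgeFinset_le_card_of_forall_adj h₁₂.symm (fun p q hpq => ?_) fun a ha b hb => ?_
  · grind [G.irrefl, G.adj_symm]
  · simp only [Set.mem_inter_iff, mem_neighborSet] at ha hb
    grind [G.irrefl, G.adj_symm]

end PathThree

theorem card_edgeFinset_le_of_preconnected [Fintype V] [DecidableEq V] [DecidableRel G.Adj]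
    (hfree : ¬ ContainsPath 5 G) (hconn : G.Preconnected) (hcard : 5 ≤ Fintype.card V) :
    #G.edgeFinset ≤ Fintype.card V := by
  by_cases hP4 : ContainsPath 4 G
  · obtain ⟨f, hf, hadj⟩ := hP4
    exact card_edgeFinset_le_of_pathFour hfree ⟨hadj 0 1 rfl, hadj 1 2 rfl, hadj 2 3 rfl,
      hf.ne (by decide), hf.ne (by decide), hf.ne (by decide)⟩ hconn hcard
  · obtain ⟨x₁, x₂, x₃, h₁₂, h₂₃, h₁₃⟩ := hconn.exists_pathThree (by omega)
    exact card_edgeFinset_le_of_pathThree hP4 h₁₂ h₂₃ h₁₃ hconn (by omega)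

theorem ncard_edgeSet_le_exP5Connected [Finite V] (hfree : ¬ ContainsPath 5 G)
    (hconn : G.Preconnected) : G.edgeSet.ncard ≤ exP5Connected (Nat.card V) := by
  classical
  have := Fintype.ofFinite V
  rw [ncard_edgeSet_eq_card_edgeFinset, Nat.card_eq_fintype_card, exP5Connected]
  split_ifs with h
  · exact Nat.choose_two_right _ ▸ card_edgeFinset_le_card_choose_two
  · exact card_edgeFinset_le_of_preconnected hfree hconn (by omega)

theorem eq_top_of_ncard_edgeSet_eq [Finite V]
    (h : G.edgeSet.ncard = Nat.card V * (Nat.card V - 1) / 2) : G = ⊤ := by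
  classical
  have := Fintype.ofFinite V
  rw [← edgeFinset_inj]
  refine eq_of_subset_of_card_le (edgeFinset_mono le_top) ?_
  rw [card_edgeFinset_top_eq_card_choose_two, Nat.choose_two_right, ← Nat.card_eq_fintype_card,
    ← h, ncard_edgeSet_eq_card_edgeFinset]

namespace ConnectedComponent

variable [Finite V] (C : G.ConnectedComponent)

lemma card_supp_pos : 0 < Nat.card C.supp :=
  Nat.card_pos_iff.2 ⟨⟨C.out, C.out_eq⟩, inferInstance⟩

lemma card_supp_add_card_compl : Nat.card C.supp + Nat.card ↥C.suppᶜ = Nat.card V := by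
  rw [Nat.card_coe_set_eq, Nat.card_coe_set_eq, Set.ncard_add_ncard_compl]

noncomputable def isoSumInduceCompl : G.induce C.supp ⊕g G.induce C.suppᶜ ≃g G :=
  Iso.sumInduceCompl C.supp fun _ _ h => (C.mem_supp_congr_adj h).1

lemma ncard_edgeSet_induce_add :
    (G.induce C.supp).edgeSet.ncard + (G.induce C.suppᶜ).edgeSet.ncard = G.edgeSet.ncard :=
  ncard_edgeSet_sum.symm.trans C.isoSumInduceCompl.ncard_edgeSet_eq

lemma nonempty_iso_completeGraph_sum {k : ℕ} (htop : G.induce C.supp = ⊤)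
    (hk : Nat.card C.supp = k) (e : G.induce C.suppᶜ ≃g H) :
    Nonempty (G ≃g completeGraph (Fin k) ⊕g H) :=
  ⟨C.isoSumInduceCompl.symm.trans
    (Iso.sumCongr (htop ▸ Iso.completeGraph (Finite.equivFinOfCardEq hk)) e)⟩

end ConnectedComponent

theorem ncard_edgeSet_le_exP5 [Finite V] (hfree : ¬ ContainsPath 5 G) :
    G.edgeSet.ncard ≤ exP5 (Nat.card V) := by
  induction hn : Nat.card V using Nat.strong_induction_on generalizing V with
  | _ n ih =>
  rcases isEmpty_or_nonempty V with hV | ⟨⟨v⟩⟩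
  · simp [Set.eq_empty_of_isEmpty]
  set C := G.connectedComponentMk v
  have hm := C.card_supp_pos
  have hsplit := C.card_supp_add_card_compl
  rw [← C.ncard_edgeSet_induce_add]
  calc _ ≤ exP5Connected (Nat.card C.supp) + exP5 (n - Nat.card C.supp) :=
        add_le_add (ncard_edgeSet_le_exP5Connected (not_containsPath_induce hfree _)
          C.connected_toSimpleGraph.preconnected)
          (ih _ (by omega) (not_containsPath_induce hfree _) (by omega))
    _ ≤ exP5 n := exP5Connected_add_exP5_sub_le hm (by omega)

theorem ConnectedComponent.induce_eq_top_of_extremal [Finite V] {a b : ℕ} (hb : b < 4)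
    (hfree : ¬ ContainsPath 5 G) (hcard : Nat.card V = 4 * a + b)
    (hedges : G.edgeSet.ncard = 6 * a + b * (b - 1) / 2) (C : G.ConnectedComponent) :
    (Nat.card C.supp = 4 ∨ Nat.card C.supp = b) ∧ G.induce C.supp = ⊤ ∧
      (G.induce C.suppᶜ).edgeSet.ncard = exP5 (Nat.card ↥C.suppᶜ) := by
  have hm := C.card_supp_pos
  have hsplit := C.card_supp_add_card_compl
  have hcompl : Nat.card ↥C.suppᶜ = 4 * a + b - Nat.card C.supp := by omega
  have hS := ncard_edgeSet_le_exP5Connected (not_containsPath_induce hfree C.supp)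
    C.connected_toSimpleGraph.preconnected
  have hR := ncard_edgeSet_le_exP5 (not_containsPath_induce hfree C.suppᶜ)
  have hle := exP5Connected_add_exP5_sub_le hm (n := 4 * a + b) (by omega)
  have hsum := C.ncard_edgeSet_induce_add
  rw [hcompl] at hR ⊢
  rw [exP5_four_mul_add hb] at hle
  have hm' := eq_four_or_eq_of_exP5Connected_add_exP5_sub_eq (a := a) hb hm (by omega) (by omega)
  refine ⟨hm', eq_top_of_ncard_edgeSet_eq ?_, by omega⟩
  have hK : exP5Connected (Nat.card C.supp) = Nat.card C.supp * (Nat.card C.supp - 1) / 2 :=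
    if_pos (by omega)
  omega

def Iso.completeGraphSumCliquesK4Kb (a b : ℕ) :
    completeGraph (Fin 4) ⊕g cliquesK4Kb a b ≃g cliquesK4Kb (a + 1) b where
  toEquiv := finSumFinEquiv.trans (finCongr (by ring))
  map_rel_iff' {u v} := by
    rcases u with u | u <;> rcases v with v | v <;> simp [cliquesK4Kb, Fin.ext_iff] <;> omega

def Iso.cliquesK4KbSumCompleteGraph (a b : ℕ) :
    cliquesK4Kb a 0 ⊕g completeGraph (Fin b) ≃g cliquesK4Kb a b where
  toEquiv := finSumFinEquiv.trans (finCongr (by ring))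
  map_rel_iff' {u v} := by
    rcases u with u | u <;> rcases v with v | v <;> simp [cliquesK4Kb, Fin.ext_iff]

end SimpleGraph

/-- Theorem 2.1 (Faudree–Schelp), uniqueness: the unique `P₅`-free graph on `n = 4a + b`
vertices (`0 ≤ b ≤ 3`) with `ex(n, P₅) = 6a + b(b-1)/2` edges is `aK₄ ∪ K_b`. -/
theorem turan_P5_extremal_graph (a b : ℕ) (hb : b ≤ 3) {V : Type*} [Fintype V]
    (G : SimpleGraph V) (hcard : Fintype.card V = 4 * a + b)
    (hfree : ¬ ContainsPath 5 G)
    (hedges : G.edgeSet.ncard = 6 * a + b * (b - 1) / 2) :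
    Nonempty (G ≃g cliquesK4Kb a b) := by
  classical
  induction hn : Fintype.card V using Nat.strong_induction_on generalizing a b V with
  | _ n ih =>
  rcases isEmpty_or_nonempty V with hV | ⟨⟨v⟩⟩
  · exact ⟨⟨Fintype.equivFinOfCardEq hcard, fun {u} => isEmptyElim u⟩⟩
  set C := G.connectedComponentMk v
  rw [← Nat.card_eq_fintype_card] at hcard hn
  have hsplit := C.card_supp_add_card_compl
  have hpos := C.card_supp_pos
  have hfree' : ¬ ContainsPath 5 (G.induce C.suppᶜ) := not_containsPath_induce hfree _
  obtain ⟨hm | hm, htop, hrest⟩ := C.induce_eq_top_of_extremal (by omega) hfree hcard hedges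
  · obtain ⟨a, rfl⟩ : ∃ a', a = a' + 1 := ⟨a - 1, by omega⟩
    have hcompl : Fintype.card ↥C.suppᶜ = 4 * a + b := by rw [Fintype.card_eq_nat_card]; omega
    obtain ⟨e⟩ := ih _ (by omega) a b hb _ hcompl hfree'
      (by rw [hrest, ← Fintype.card_eq_nat_card, hcompl, exP5_four_mul_add (by omega)]) rfl
    obtain ⟨f⟩ := C.nonempty_iso_completeGraph_sum htop hm e
    exact ⟨f.trans (Iso.completeGraphSumCliquesK4Kb a b)⟩
  · have hcompl : Fintype.card ↥C.suppᶜ = 4 * a + 0 := by rw [Fintype.card_eq_nat_card]; omega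
    obtain ⟨e⟩ := ih _ (by omega) a 0 (by omega) _ hcompl hfree'
      (by rw [hrest, ← Fintype.card_eq_nat_card, hcompl, exP5_four_mul_add (by omega)]) rfl
    obtain ⟨f⟩ := C.nonempty_iso_completeGraph_sum htop hm e
    exact ⟨f.trans (Iso.sumComm.trans (Iso.cliquesK4KbSumCompleteGraph a b))⟩
end

section
/- If r ≡ 3 (mod 4) and n = 3r, then every r-edge-colouring of the complete graph K_n contains a monochromatic copy of P_5. -/
open SimpleGraph Finset
set_option linter.unusedSectionVars false
set_option maxHeartbeats 1600000

section Helpers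
variable {W : Type*} {G : SimpleGraph W}

lemma mkP5 {a b c d e : W}
    (h1 : G.Adj a b) (h2 : G.Adj b c) (h3 : G.Adj c d) (h4 : G.Adj d e)
    (nac : a ≠ c) (nad : a ≠ d) (nae : a ≠ e) (nbd : b ≠ d) (nbe : b ≠ e)
    (nce : c ≠ e) : ContainsPath 5 G := by
  refine ⟨![a,b,c,d,e], ?_, ?_⟩
  · have nab := h1.ne; have nbc := h2.ne; have ncd := h3.ne; have nde := h4.ne
    intro i j hij
    fin_cases i <;> fin_cases j <;> simp_all
  · intro i j hij
    fin_cases i <;> fin_cases j <;> simp_all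

lemma containsPath_of_induce {S : Set W} (h : ContainsPath 5 (G.induce S)) :
    ContainsPath 5 G := by
  obtain ⟨f, hinj, hadj⟩ := h
  exact ⟨fun i => (f i : W), Subtype.val_injective.comp hinj, fun i j hij => hadj i j hij⟩

end Helpers

variable {V : Type} [Fintype V] [DecidableEq V]

lemma crossing {G : SimpleGraph V} {S : Finset V} :
    ∀ {u w : V}, G.Walk u w → u ∈ S → w ∉ S → ∃ a ∈ S, ∃ b, b ∉ S ∧ G.Adj a b := by
  intro u w p
  induction p with
  | nil => intro hu hw; exact absurd hu hw
  | @cons x y z h' p ih =>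
    intro hu hw
    by_cases hy : y ∈ S
    · exact ih hy hw
    · exact ⟨x, hu, y, hy, h'⟩

lemma reach_in_set {G : SimpleGraph V} {S : Set V} :
    ∀ {u w : V} (p : G.Walk u w), (∀ x ∈ p.support, x ∈ S) →
      ∀ (hu : u ∈ S) (hw : w ∈ S), (G.induce S).Reachable ⟨u, hu⟩ ⟨w, hw⟩ := by
  intro u w p
  induction p with
  | nil => intro _ hu hw; rfl
  | @cons x y z h' p ih =>
    intro hsupp hu hw
    have hy : y ∈ S := hsupp y (by simp [Walk.support_cons])
    have step : (G.induce S).Adj ⟨x, hu⟩ ⟨y, hy⟩ := h'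
    exact step.reachable.trans (ih (fun a ha => hsupp a (by simp [Walk.support_cons, ha])) hy hw)

-- degree of induced graph, general
lemma degree_induce_filter {G : SimpleGraph V} [DecidableRel G.Adj] {S : Set V}
    [DecidablePred (· ∈ S)] (v : S) :
    (G.induce S).degree v = ((G.neighborFinset (v : V)).filter (· ∈ S)).card := by
  classical
  unfold SimpleGraph.degree
  apply Finset.card_bij (fun (w : S) _ => (w : V))
  · intro w hw
    simp only [mem_filter, mem_neighborFinset] at *
    exact ⟨hw, w.2⟩
  · intro w₁ h₁ w₂ h₂ h
    exact Subtype.ext h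
  · intro w hw
    simp only [mem_filter, mem_neighborFinset] at hw
    exact ⟨⟨w, hw.2⟩, by simp [mem_neighborFinset]; exact hw.1, rfl⟩

lemma degree_induce_closed {G : SimpleGraph V} [DecidableRel G.Adj] {S : Set V}
    [DecidablePred (· ∈ S)] (hS : ∀ a b, a ∈ S → G.Adj a b → b ∈ S) (v : S) :
    (G.induce S).degree v = G.degree v := by
  rw [degree_induce_filter]
  rw [Finset.filter_true_of_mem]
  · rfl
  · intro w hw
    rw [mem_neighborFinset] at hw
    exact hS _ _ v.2 hw

lemma degree_induce_ne {G : SimpleGraph V} [DecidableRel G.Adj] (v : V) (u : {x | x ≠ v}) :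
    (G.induce {x | x ≠ v}).degree u + (if G.Adj (u : V) v then 1 else 0) = G.degree (u : V) := by
  rw [degree_induce_filter]
  have : ((G.neighborFinset (u : V)).filter (· ∈ {x | x ≠ v})) = (G.neighborFinset (u:V)).erase v := by
    ext x
    simp [mem_erase, and_comm, Set.mem_setOf_eq]
  rw [this]
  by_cases hadj : G.Adj (u : V) v
  · have hv : v ∈ G.neighborFinset (u : V) := by rw [mem_neighborFinset]; exact hadj
    rw [if_pos hadj, Finset.card_erase_of_mem hv]
    have : 0 < (G.neighborFinset (u:V)).card := Finset.card_pos.mpr ⟨v, hv⟩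
    unfold SimpleGraph.degree
    omega
  · have hv : v ∉ G.neighborFinset (u : V) := by rw [mem_neighborFinset]; exact hadj
    rw [if_neg hadj, Finset.erase_eq_of_notMem hv, add_zero]
    rfl

lemma sum_degree_erase {G : SimpleGraph V} [DecidableRel G.Adj] (v : V) :
    (∑ u : {x | x ≠ v}, (G.induce {x | x ≠ v}).degree u) + 2 * G.degree v
      = ∑ u, G.degree u := by
  classical
  have key : ∀ u : {x | x ≠ v},
      (G.induce {x | x ≠ v}).degree u = G.degree (u : V) - (if G.Adj (u : V) v then 1 else 0) := by
    intro u; have := degree_induce_ne (G := G) v u; omega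
  rw [Finset.sum_congr rfl (fun u _ => key u)]
  have h1 : (∑ u : {x | x ≠ v}, (G.degree (u:V) - (if G.Adj (u:V) v then 1 else 0)))
      = ∑ x ∈ univ.erase v, (G.degree x - (if G.Adj x v then 1 else 0)) := by
    refine (Finset.sum_subtype (p := (· ∈ {x | x ≠ v})) (univ.erase v) (fun x => ?_)
      (fun x => G.degree x - (if G.Adj x v then 1 else 0))).symm
    simp [Set.mem_setOf_eq]
  rw [h1]
  have h2 : ∑ x ∈ univ.erase v, (G.degree x - (if G.Adj x v then 1 else 0))
      + ∑ x ∈ univ.erase v, (if G.Adj x v then 1 else 0)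
      = ∑ x ∈ univ.erase v, G.degree x := by
    rw [← Finset.sum_add_distrib]
    apply Finset.sum_congr rfl
    intro x hx
    have : (if G.Adj x v then 1 else 0) ≤ G.degree x := by
      by_cases h : G.Adj x v
      · simp only [if_pos h]
        have : v ∈ G.neighborFinset x := by rw [mem_neighborFinset]; exact h
        have := Finset.card_pos.mpr ⟨v, this⟩
        unfold SimpleGraph.degree; omega
      · simp [if_neg h]
    omega
  have h3 : ∑ x ∈ univ.erase v, (if G.Adj x v then 1 else 0) = G.degree v := by
    rw [Finset.sum_boole]
    have : (univ.erase v).filter (fun x => G.Adj x v) = G.neighborFinset v := by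
      ext x
      simp only [mem_filter, mem_erase, mem_univ, mem_neighborFinset, true_and]
      constructor
      · rintro ⟨-, h⟩; exact h.symm
      · intro h; exact ⟨⟨h.ne', trivial⟩, h.symm⟩
    rw [this]; rfl
  have h4 : ∑ x ∈ univ.erase v, G.degree x + G.degree v = ∑ u, G.degree u :=
    Finset.sum_erase_add _ _ (mem_univ v)
  omega

lemma reach_avoid {G : SimpleGraph V} [DecidableRel G.Adj] {v : V} (hd : G.degree v ≤ 1) :
    ∀ (L : ℕ) {a b : V} (p : G.Walk a b), p.length ≤ L → ∀ (ha : a ≠ v) (hb : b ≠ v),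
      (G.induce {x | x ≠ v}).Reachable ⟨a, ha⟩ ⟨b, hb⟩ := by
  intro L
  induction L with
  | zero =>
    intro a b p hp ha hb
    cases p with
    | nil => rfl
    | cons h q => simp [Walk.length_cons] at hp
  | succ L ih =>
    intro a b p hp ha hb
    cases p with
    | nil => rfl
    | @cons _ y _ h q =>
      by_cases hy : y = v
      · cases q with
        | nil => exact absurd hy hb
        | @cons _ z _ h2 q2 =>
          have hza : z = a := by
            have h1' : a ∈ G.neighborFinset v := by
              rw [mem_neighborFinset]; exact hy ▸ h.symm
            have h2' : z ∈ G.neighborFinset v := by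
              rw [mem_neighborFinset]; exact hy ▸ h2
            have hcard : (G.neighborFinset v).card ≤ 1 := by
              rw [card_neighborFinset_eq_degree]; exact hd
            exact Finset.card_le_one.mp hcard z h2' a h1'
          subst hza
          apply ih q2 (by simp [Walk.length_cons] at hp ⊢; omega) ha hb
      · have step : (G.induce {x | x ≠ v}).Adj ⟨a, ha⟩ ⟨y, hy⟩ := h
        exact step.reachable.trans (ih q (by simp [Walk.length_cons] at hp; omega) hy hb)

lemma connected_erase_leaf {G : SimpleGraph V} [DecidableRel G.Adj] (hc : G.Connected)
    {v : V} (hd : G.degree v ≤ 1) (hcard : 2 ≤ Fintype.card V) :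
    (G.induce {x | x ≠ v}).Connected := by
  obtain ⟨u, hu⟩ := Fintype.exists_ne_of_one_lt_card (by omega) v
  rw [connected_iff]
  refine ⟨?_, ⟨⟨u, hu⟩⟩⟩
  rintro ⟨a, ha⟩ ⟨b, hb⟩
  obtain ⟨p⟩ := hc.preconnected a b
  exact reach_avoid hd p.length p le_rfl ha hb

lemma exists_not_mem_of_card_lt {S : Finset V} (h : S.card < Fintype.card V) :
    ∃ z, z ∉ S := by
  by_contra h'
  push_neg at h'
  have : (univ : Finset V) ⊆ S := fun x _ => h' x
  have := Finset.card_le_card this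
  rw [Finset.card_univ] at this
  omega

lemma get_crossing {G : SimpleGraph V} (hpre : G.Preconnected) {S : Finset V}
    {u : V} (hu : u ∈ S) (hcard : S.card < Fintype.card V) :
    ∃ a ∈ S, ∃ b, b ∉ S ∧ G.Adj a b := by
  obtain ⟨z, hz⟩ := exists_not_mem_of_card_lt hcard
  obtain ⟨p⟩ := hpre u z
  exact crossing p hu hz

lemma card4_lt {a b c d : V} (h : 5 ≤ Fintype.card V) :
    ({a, b, c, d} : Finset V).card < Fintype.card V := by
  have : ({a, b, c, d} : Finset V).card ≤ 4 := by
    apply le_trans (Finset.card_insert_le _ _)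
    have : ({b, c, d} : Finset V).card ≤ 3 := by
      apply le_trans (Finset.card_insert_le _ _)
      apply le_trans (Nat.succ_le_succ (Finset.card_insert_le _ _))
      simp
    omega
  omega

lemma cycle4_absurd {G : SimpleGraph V} (h5 : ¬ContainsPath 5 G) (hpre : G.Preconnected)
    (hcard : 5 ≤ Fintype.card V) {a b c d : V}
    (hab : G.Adj a b) (hbc : G.Adj b c) (hcd : G.Adj c d) (hda : G.Adj d a)
    (hac : a ≠ c) (hbd : b ≠ d) : False := by
  obtain ⟨w, hw, y, hy, hwy⟩ :=
    get_crossing hpre (S := {a,b,c,d}) (u := a) (by simp) (card4_lt hcard)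
  have hya : y ≠ a := by intro h; exact hy (by simp [h])
  have hyb : y ≠ b := by intro h; exact hy (by simp [h])
  have hyc : y ≠ c := by intro h; exact hy (by simp [h])
  have hyd : y ≠ d := by intro h; exact hy (by simp [h])
  simp only [mem_insert, mem_singleton] at hw
  rcases hw with rfl | rfl | rfl | rfl
  · exact h5 (mkP5 hwy.symm hda.symm hcd.symm hbc.symm hyd hyc hyb hac hab.ne hbd.symm)
  · exact h5 (mkP5 hwy.symm hab.symm hda.symm hcd.symm hya hyd hyc hbd hbc.ne hac)
  · exact h5 (mkP5 hwy.symm hcd hda hab hyd hya hyb hac.symm hbc.ne' hbd.symm)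
  · exact h5 (mkP5 hwy.symm hcd.symm hbc.symm hab.symm hyc hyb hya hbd.symm hda.ne hac.symm)

lemma kite_absurd {G : SimpleGraph V} (h5 : ¬ContainsPath 5 G) (hpre : G.Preconnected)
    (hcard : 5 ≤ Fintype.card V) {a b c d : V}
    (hab : G.Adj a b) (hbc : G.Adj b c) (hcd : G.Adj c d)
    (hac : G.Adj a c) (hbd : G.Adj b d) (had : a ≠ d) : False := by
  obtain ⟨w, hw, y, hy, hwy⟩ :=
    get_crossing hpre (S := {a,b,c,d}) (u := a) (by simp) (card4_lt hcard)
  have hya : y ≠ a := by intro h; exact hy (by simp [h])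
  have hyb : y ≠ b := by intro h; exact hy (by simp [h])
  have hyc : y ≠ c := by intro h; exact hy (by simp [h])
  have hyd : y ≠ d := by intro h; exact hy (by simp [h])
  simp only [mem_insert, mem_singleton] at hw
  rcases hw with rfl | rfl | rfl | rfl
  · exact h5 (mkP5 hwy.symm hac hbc.symm hbd hyc hyb hyd hab.ne had hcd.ne)
  · exact h5 (mkP5 hwy.symm hab.symm hac hcd hya hyc hyd hbc.ne hbd.ne had)
  · exact h5 (mkP5 hwy.symm hac.symm hab hbd hya hyb hyd hbc.ne' hcd.ne had)
  · exact h5 (mkP5 hwy.symm hbd.symm hab.symm hac hyb hya hyc had.symm hcd.ne' hbc.ne)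

lemma p4_absurd {G : SimpleGraph V} [DecidableRel G.Adj] (h5 : ¬ContainsPath 5 G)
    (hpre : G.Preconnected) (hcard : 5 ≤ Fintype.card V) (hdeg : ∀ x, 2 ≤ G.degree x)
    {a b c d : V} (hab : G.Adj a b) (hbc : G.Adj b c) (hcd : G.Adj c d)
    (hac : a ≠ c) (hbd : b ≠ d) (had : a ≠ d) : False := by
  obtain ⟨y, hy, hyb⟩ := Finset.exists_mem_ne
    (s := G.neighborFinset a) (by rw [card_neighborFinset_eq_degree]; exact hdeg a) b
  rw [mem_neighborFinset] at hy
  have hya : y ≠ a := hy.ne'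
  by_cases hyS : y = c ∨ y = d
  · rcases hyS with h | h
    · have hacadj : G.Adj a c := h ▸ hy
      obtain ⟨w, hw, hwc⟩ := Finset.exists_mem_ne
        (s := G.neighborFinset d) (by rw [card_neighborFinset_eq_degree]; exact hdeg d) c
      rw [mem_neighborFinset] at hw
      have hwd : w ≠ d := hw.ne'
      by_cases hwS : w = a ∨ w = b
      · rcases hwS with h' | h'
        · have hwadj : G.Adj d a := h' ▸ hw
          exact cycle4_absurd h5 hpre hcard hab hbc hcd hwadj hac hbd
        · have hwadj : G.Adj d b := h' ▸ hw
          exact kite_absurd h5 hpre hcard hab hbc hcd hacadj hwadj.symm had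
      · push_neg at hwS
        exact h5 (mkP5 hab hbc hcd hw hac had (Ne.symm hwS.1) hbd (Ne.symm hwS.2)
          (Ne.symm hwc))
    · have hadadj : G.Adj a d := h ▸ hy
      exact cycle4_absurd h5 hpre hcard hab hbc hcd hadadj.symm hac hbd
  · push_neg at hyS
    exact h5 (mkP5 hy.symm hab hbc hcd hyb hyS.1 hyS.2 hac had hbd)

lemma exists_leaf {G : SimpleGraph V} [DecidableRel G.Adj] (h5 : ¬ContainsPath 5 G)
    (hconn : G.Connected) (hcard : 5 ≤ Fintype.card V) : ∃ v, G.degree v ≤ 1 := by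
  by_contra hno
  push_neg at hno
  have hdeg : ∀ x, 2 ≤ G.degree x := fun x => hno x
  have hne : Nonempty V := Fintype.card_pos_iff.mp (by omega)
  obtain ⟨v0⟩ := hne
  obtain ⟨v1, hv1⟩ := Finset.card_pos.mp (show 0 < (G.neighborFinset v0).card by
    rw [card_neighborFinset_eq_degree]; have := hdeg v0; omega)
  rw [mem_neighborFinset] at hv1
  obtain ⟨v2, hv2, hv20⟩ := Finset.exists_mem_ne
    (s := G.neighborFinset v1) (by rw [card_neighborFinset_eq_degree]; exact hdeg v1) v0
  rw [mem_neighborFinset] at hv2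
  obtain ⟨v3, hv3, hv31⟩ := Finset.exists_mem_ne
    (s := G.neighborFinset v2) (by rw [card_neighborFinset_eq_degree]; exact hdeg v2) v1
  rw [mem_neighborFinset] at hv3
  by_cases hv30 : v3 = v0
  · -- triangle v0 v1 v2
    have h20 : G.Adj v2 v0 := hv30 ▸ hv3
    have hS : ({v0, v1, v2} : Finset V).card < Fintype.card V := by
      have : ({v0, v1, v2} : Finset V).card ≤ 3 := by
        apply le_trans (Finset.card_insert_le _ _)
        apply le_trans (Nat.succ_le_succ (Finset.card_insert_le _ _))
        simp
      omega
    obtain ⟨w, hw, y, hy, hwy⟩ := get_crossing hconn.preconnected (S := {v0,v1,v2}) (u := v0) (by simp) hS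
    have hy0 : y ≠ v0 := by intro h; exact hy (by simp [h])
    have hy1 : y ≠ v1 := by intro h; exact hy (by simp [h])
    have hy2 : y ≠ v2 := by intro h; exact hy (by simp [h])
    simp only [mem_insert, mem_singleton] at hw
    rcases hw with rfl | rfl | rfl
    · exact p4_absurd h5 hconn.preconnected hcard hdeg hwy.symm hv1 hv2 hy1 (h20.ne).symm hy2
    · exact p4_absurd h5 hconn.preconnected hcard hdeg hwy.symm hv2 h20 hy2 hv1.ne' hy0
    · exact p4_absurd h5 hconn.preconnected hcard hdeg hwy.symm h20 hv1 hy0 hv2.ne' hy1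
  · exact p4_absurd h5 hconn.preconnected hcard hdeg hv1 hv2 hv3 hv20.symm hv31.symm
      (Ne.symm hv30)

-- degree-3 vertices are adjacent to everything
lemma adj_of_degree_eq {V : Type} [Fintype V] [DecidableEq V] {G : SimpleGraph V}
    [DecidableRel G.Adj] {x : V} (h : G.degree x = Fintype.card V - 1) :
    ∀ u, u ≠ x → G.Adj x u := by
  have hsub : G.neighborFinset x ⊆ univ.erase x := by
    intro u hu
    rw [mem_neighborFinset] at hu
    exact Finset.mem_erase.mpr ⟨hu.ne', mem_univ u⟩
  have hcard : (univ.erase x).card ≤ (G.neighborFinset x).card := by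
    rw [card_neighborFinset_eq_degree, h, Finset.card_erase_of_mem (mem_univ x),
      Finset.card_univ]
  have heq := Finset.eq_of_subset_of_card_le hsub hcard
  intro u hu
  have : u ∈ univ.erase x := Finset.mem_erase.mpr ⟨hu, mem_univ u⟩
  rw [← heq, mem_neighborFinset] at this
  exact this

lemma comp_big : ∀ (N : ℕ), 5 ≤ N → ∀ (V : Type) (_ : Fintype V) (_ : DecidableEq V)
    (G : SimpleGraph V) (_ : DecidableRel G.Adj), Fintype.card V = N →
    ¬ContainsPath 5 G → G.Connected → ∑ v, G.degree v ≤ 2 * N := by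
  intro N
  induction N using Nat.strong_induction_on with
  | _ N ih =>
  intro h5N V instF instD G instA hcard h5 hconn
  obtain ⟨v, hv⟩ := exists_leaf h5 hconn (by omega)
  set S : Set V := {x | x ≠ v} with hS
  have hcardS : Fintype.card S = N - 1 := by
    have e1 : Fintype.card S = Fintype.card {x // ¬ (x = v)} :=
      Fintype.card_congr (Equiv.subtypeEquivRight (fun x => Iff.rfl))
    rw [e1, Fintype.card_subtype_compl, Fintype.card_subtype_eq, hcard]
  have hsplit : (∑ u : S, (G.induce S).degree u) + 2 * G.degree v = ∑ u, G.degree u :=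
    sum_degree_erase v
  have hfree' : ¬ContainsPath 5 (G.induce S) := fun h => h5 (containsPath_of_induce h)
  have hconn' : (G.induce S).Connected := connected_erase_leaf hconn hv (by omega)
  by_cases h6 : 6 ≤ N
  · have hIH := ih (N-1) (by omega) (by omega) S inferInstance inferInstance
      (G.induce S) inferInstance hcardS hfree' hconn'
    omega
  · -- N = 5
    have hN5 : N = 5 := by omega
    -- Show the degree sum of the induced 4-vertex graph is at most 9 (hence ≤ 8)
    have hD' : (∑ u : S, (G.induce S).degree u) ≤ 9 := by
      by_contra hD
      push_neg at hD
      -- there are two vertices of degree 3 in the induced graph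
      have hcard4 : Fintype.card S = 4 := by omega
      have hdegle : ∀ u : S, (G.induce S).degree u ≤ 3 := by
        intro u
        have := (G.induce S).degree_lt_card_verts u
        omega
      obtain ⟨x, hx3⟩ : ∃ x : S, (G.induce S).degree x = 3 := by
        by_contra hall
        push_neg at hall
        have : ∀ u : S, (G.induce S).degree u ≤ 2 := by
          intro u; have h1 := hdegle u; have h2 := hall u; omega
        have := Finset.sum_le_card_nsmul univ (fun u : S => (G.induce S).degree u) 2
          (fun u _ => this u)
        simp only [Finset.card_univ, hcard4, smul_eq_mul] at this
        omega
      obtain ⟨y, hy3, hyx⟩ : ∃ y : S, (G.induce S).degree y = 3 ∧ y ≠ x := by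
        by_contra hall
        push_neg at hall
        have hrest : ∀ u ∈ univ.erase x, (G.induce S).degree u ≤ 2 := by
          intro u hu
          have hune : u ≠ x := (Finset.mem_erase.mp hu).1
          have h1 := hdegle u
          by_cases h : (G.induce S).degree u = 3
          · exact absurd hune (by intro hh; exact hh (hall u h))
          · omega
        have hsum := Finset.sum_le_card_nsmul (univ.erase x)
          (fun u : S => (G.induce S).degree u) 2 hrest
        have hcarde : (univ.erase x).card = 3 := by
          rw [Finset.card_erase_of_mem (mem_univ x), Finset.card_univ, hcard4]
        rw [hcarde, smul_eq_mul] at hsum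
        have htot : (G.induce S).degree x + ∑ u ∈ univ.erase x, (G.induce S).degree u
            = ∑ u : S, (G.induce S).degree u :=
          Finset.add_sum_erase univ (fun u : S => (G.induce S).degree u) (mem_univ x)
        omega
      -- remaining two vertices
      obtain ⟨s, hs, t, ht, hst⟩ : ∃ s ∈ (univ.erase x).erase y,
          ∃ t ∈ (univ.erase x).erase y, s ≠ t := by
        apply Finset.one_lt_card.mp
        have : ((univ.erase x).erase y).card = 2 := by
          rw [Finset.card_erase_of_mem, Finset.card_erase_of_mem (mem_univ x),
            Finset.card_univ, hcard4]
          exact Finset.mem_erase.mpr ⟨hyx, mem_univ y⟩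
        omega
      have hsy : s ≠ y := (Finset.mem_erase.mp hs).1
      have hsx : s ≠ x := (Finset.mem_erase.mp (Finset.mem_erase.mp hs).2).1
      have hty : t ≠ y := (Finset.mem_erase.mp ht).1
      have htx : t ≠ x := (Finset.mem_erase.mp (Finset.mem_erase.mp ht).2).1
      have hadjx : ∀ u : S, u ≠ x → (G.induce S).Adj x u :=
        adj_of_degree_eq (by rw [hx3, hcard4])
      have hadjy : ∀ u : S, u ≠ y → (G.induce S).Adj y u :=
        adj_of_degree_eq (by rw [hy3, hcard4])
      -- v has a neighbour a
      obtain ⟨w, hwmem, a, haS, hwa⟩ := get_crossing hconn.preconnected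
        (S := {v}) (u := v) (Finset.mem_singleton_self v) (by rw [hcard]; simp; omega)
      rw [Finset.mem_singleton] at hwmem
      rw [Finset.mem_singleton] at haS
      have hwa' : G.Adj v a := hwmem ▸ hwa
      have ha' : a ∈ S := haS
      set a' : S := ⟨a, ha'⟩ with ha'def
      -- classify a'
      have h1m : x ∉ ({y, s, t} : Finset S) := by
        simp only [mem_insert, mem_singleton]
        push_neg
        exact ⟨fun h => hyx h.symm, fun h => hsx h.symm, fun h => htx h.symm⟩
      have h2m : y ∉ ({s, t} : Finset S) := by
        simp only [mem_insert, mem_singleton]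
        push_neg
        exact ⟨fun h => hsy h.symm, fun h => hty h.symm⟩
      have h3m : s ∉ ({t} : Finset S) := by simpa using hst
      have huniv : (univ : Finset S) = {x, y, s, t} := by
        symm
        apply Finset.eq_univ_of_card
        rw [Finset.card_insert_of_notMem h1m, Finset.card_insert_of_notMem h2m,
          Finset.card_insert_of_notMem h3m, Finset.card_singleton, hcard4]
      have hamem : a' ∈ ({x, y, s, t} : Finset S) := huniv ▸ mem_univ a'
      simp only [mem_insert, mem_singleton] at hamem
      -- adjacency facts in G
      have hxs : G.Adj (x : V) (s : V) := hadjx s hsx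
      have hxt : G.Adj (x : V) (t : V) := hadjx t htx
      have hxy : G.Adj (x : V) (y : V) := hadjx y hyx
      have hys : G.Adj (y : V) (s : V) := hadjy s hsy
      have hyt : G.Adj (y : V) (t : V) := hadjy t hty
      have cne : ∀ {p q : S}, p ≠ q → (p : V) ≠ (q : V) :=
        fun h => Subtype.coe_ne_coe.mpr h
      have hvx : v ≠ (x : V) := Ne.symm x.2
      have hvy : v ≠ (y : V) := Ne.symm y.2
      have hvs : v ≠ (s : V) := Ne.symm s.2
      have hvt : v ≠ (t : V) := Ne.symm t.2
      rcases hamem with h | h | h | h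
      · have hva : G.Adj v (x : V) := by
          have : a = (x : V) := congrArg Subtype.val h
          rw [← this]; exact hwa'
        exact h5 (mkP5 hva hxs hys.symm hyt hvs hvy hvt (cne (fun hh => hyx hh.symm))
          (cne (fun hh => htx hh.symm)) (cne hst))
      · have hva : G.Adj v (y : V) := by
          have : a = (y : V) := congrArg Subtype.val h
          rw [← this]; exact hwa'
        exact h5 (mkP5 hva hys hxs.symm hxt hvs hvx hvt (cne hyx) (cne (fun hh => hty hh.symm))
          (cne (fun hh => hst hh)))
      · have hva : G.Adj v (s : V) := by
          have : a = (s : V) := congrArg Subtype.val h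
          rw [← this]; exact hwa'
        exact h5 (mkP5 hva hxs.symm hxy hyt hvx hvy hvt (cne hsy) (cne (fun hh => hst hh))
          (cne (fun hh => htx hh.symm)))
      · have hva : G.Adj v (t : V) := by
          have : a = (t : V) := congrArg Subtype.val h
          rw [← this]; exact hwa'
        exact h5 (mkP5 hva hxt.symm hxy hys hvx hvy hvs (cne hty) (cne hst.symm)
          (cne (fun hh => hsx hh.symm)))
    have ⟨E, hE⟩ : ∃ E, (∑ u : S, (G.induce S).degree u) = 2 * E :=
      ⟨_, (G.induce S).sum_degrees_eq_twice_card_edges⟩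
    omega

def wval : ℕ → ℕ := fun c => if c = 4 then 0 else if c = 2 then 4 else if c ≤ 4 then 3 else c

def rho : ℕ → ℕ := fun k => if k % 4 = 0 then 0 else if k % 4 = 2 then 4 else 3

lemma wval_spec (c : ℕ) : (c = 4 ∧ wval c = 0) ∨ (c = 2 ∧ wval c = 4) ∨
    ((c = 1 ∨ c = 3) ∧ wval c = 3) ∨ (5 ≤ c ∧ wval c = c) ∨ (c = 0 ∧ wval c = 3) := by
  unfold wval; split_ifs <;> omega

lemma rho_spec (k : ℕ) : (k % 4 = 0 ∧ rho k = 0) ∨ (k % 4 = 1 ∧ rho k = 3) ∨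
    (k % 4 = 2 ∧ rho k = 4) ∨ (k % 4 = 3 ∧ rho k = 3) := by
  unfold rho; split_ifs <;> omega

lemma comp_bound {V : Type} [Fintype V] [DecidableEq V] (G : SimpleGraph V)
    [DecidableRel G.Adj] (N : ℕ) (hcard : Fintype.card V = N)
    (h5 : ¬ContainsPath 5 G) (hconn : G.Connected) :
    (∑ v, G.degree v) + wval N ≤ 3 * N := by
  have hNpos : 1 ≤ N := by
    rw [← hcard, Nat.one_le_iff_ne_zero]
    have : Nonempty V := hconn.nonempty
    simp [Fintype.card_ne_zero]
  by_cases h5le : 5 ≤ N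
  · have h := comp_big N h5le V inferInstance inferInstance G inferInstance hcard h5 hconn
    have hw : wval N = N := by unfold wval; split_ifs <;> omega
    omega
  · have hdegs : ∀ v, G.degree v ≤ N - 1 := by
      intro v
      have := G.degree_lt_card_verts v
      omega
    have hsum : ∑ v, G.degree v ≤ N * (N - 1) := by
      have := Finset.sum_le_card_nsmul univ (fun v => G.degree v) (N - 1)
        (fun v _ => hdegs v)
      rwa [Finset.card_univ, hcard, smul_eq_mul] at this
    have hw := wval_spec N
    interval_cases N <;> omega

lemma GLem : ∀ (N : ℕ), ∀ (V : Type) (_ : Fintype V) (_ : DecidableEq V)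
    (G : SimpleGraph V) (_ : DecidableRel G.Adj), Fintype.card V = N → ¬ContainsPath 5 G →
    ((∑ v, G.degree v) + rho N ≤ 3 * N ∧
     ((N % 4 = 0 ∨ N % 4 = 1) → (∑ v, G.degree v) + rho N = 3 * N →
       ∀ v, G.degree v = 0 ∨ G.degree v = 3)) := by
  intro N
  induction N using Nat.strong_induction_on with
  | _ N ih =>
  intro V instF instD G instA hcard h5
  by_cases hN0 : N = 0
  · subst hN0
    have hemp : IsEmpty V := Fintype.card_eq_zero_iff.mp hcard
    constructor
    · simp [rho, Finset.univ_eq_empty]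
    · intro _ _ v; exact isEmptyElim v
  · have hNpos : 1 ≤ N := by omega
    have hne : Nonempty V := Fintype.card_pos_iff.mp (by omega)
    obtain ⟨v0⟩ := hne
    set Sset : Set V := {x | G.Reachable v0 x} with hSdef
    set Tset : Set V := {x | ¬ G.Reachable v0 x} with hTdef
    have hSclosed : ∀ a b, a ∈ Sset → G.Adj a b → b ∈ Sset :=
      fun a b ha hab => ha.trans hab.reachable
    have hTclosed : ∀ a b, a ∈ Tset → G.Adj a b → b ∈ Tset :=
      fun a b ha hab hb => ha (hb.trans hab.symm.reachable)
    have dS : ∀ u : Sset, (G.induce Sset).degree u = G.degree (u : V) :=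
      degree_induce_closed hSclosed
    have dT : ∀ u : Tset, (G.induce Tset).degree u = G.degree (u : V) :=
      degree_induce_closed hTclosed
    set cS := Fintype.card Sset with hcSdef
    set cT := Fintype.card Tset with hcTdef
    have hct : cS + cT = N := by
      have e1 : cS = Fintype.card {x // G.Reachable v0 x} :=
        Fintype.card_congr (Equiv.subtypeEquivRight (fun x => Iff.rfl))
      have e2 : cT = Fintype.card {x // ¬ G.Reachable v0 x} :=
        Fintype.card_congr (Equiv.subtypeEquivRight (fun x => Iff.rfl))
      have e3 := Fintype.card_subtype_compl (fun x => G.Reachable v0 x)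
      have e4 := Fintype.card_subtype_le (fun x => G.Reachable v0 x)
      rw [e1, e2, e3, ← hcard]
      omega
    have hv0S : v0 ∈ Sset := Reachable.refl v0
    have hcSpos : 1 ≤ cS := by
      rw [hcSdef]
      exact Fintype.card_pos_iff.mpr ⟨⟨v0, hv0S⟩⟩
    -- sum split
    have hsum : (∑ u : Sset, G.degree (u : V)) + (∑ u : Tset, G.degree (u : V))
        = ∑ v, G.degree v := by
      have h := Fintype.sum_subtype_add_sum_subtype (fun x => G.Reachable v0 x) (fun x => G.degree x)
      have e1 : (∑ u : Sset, G.degree (u : V))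
          = ∑ u : {x // G.Reachable v0 x}, G.degree (u : V) :=
        Fintype.sum_equiv (Equiv.subtypeEquivRight (fun x => Iff.rfl)) _ _ (fun u => rfl)
      have e2 : (∑ u : Tset, G.degree (u : V))
          = ∑ u : {x // ¬ G.Reachable v0 x}, G.degree (u : V) :=
        Fintype.sum_equiv (Equiv.subtypeEquivRight (fun x => Iff.rfl)) _ _ (fun u => rfl)
      rw [e1, e2, h]
    -- connectivity of the S part
    have hconnS : (G.induce Sset).Connected := by
      rw [connected_iff]
      refine ⟨?_, ⟨⟨v0, hv0S⟩⟩⟩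
      rintro ⟨a, ha⟩ ⟨b, hb⟩
      obtain ⟨p⟩ := (ha.symm.trans hb : G.Reachable a b)
      refine reach_in_set p (fun x hx => ?_) ha hb
      exact ha.trans ⟨p.takeUntil x hx⟩
    have hfreeS : ¬ContainsPath 5 (G.induce Sset) := fun h => h5 (containsPath_of_induce h)
    have hfreeT : ¬ContainsPath 5 (G.induce Tset) := fun h => h5 (containsPath_of_induce h)
    -- the component bound on S
    have hA1 : (∑ u : Sset, G.degree (u : V)) + wval cS ≤ 3 * cS := by
      have := comp_bound (G.induce Sset) cS hcSdef.symm hfreeS hconnS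
      rwa [Finset.sum_congr rfl (fun u _ => dS u)] at this
    -- evenness of the S degree sum
    obtain ⟨ES, hES⟩ : ∃ E, (∑ u : Sset, G.degree (u : V)) = 2 * E := by
      refine ⟨(G.induce Sset).edgeFinset.card, ?_⟩
      rw [← (G.induce Sset).sum_degrees_eq_twice_card_edges]
      exact (Finset.sum_congr rfl (fun u _ => dS u)).symm
    -- induction on the T part
    have hcTlt : cT < N := by omega
    have ihT := ih cT hcTlt Tset inferInstance inferInstance (G.induce Tset) inferInstance
      hcTdef.symm hfreeT
    have hA2 : (∑ u : Tset, G.degree (u : V)) + rho cT ≤ 3 * cT := by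
      have := ihT.1
      rwa [Finset.sum_congr rfl (fun u _ => dT u)] at this
    constructor
    · -- part A
      rcases rho_spec N with ⟨h1, h2⟩ | ⟨h1, h2⟩ | ⟨h1, h2⟩ | ⟨h1, h2⟩ <;>
        rcases rho_spec cT with ⟨g1, g2⟩ | ⟨g1, g2⟩ | ⟨g1, g2⟩ | ⟨g1, g2⟩ <;>
        rcases wval_spec cS with ⟨f1, f2⟩ | ⟨f1, f2⟩ | ⟨f1, f2⟩ | ⟨f1, f2⟩ | ⟨f1, f2⟩ <;>
        omega
    · -- part B
      intro hres heq v
      have hkey : (cS = 4 ∧ (∑ u : Sset, G.degree (u : V)) = 12 ∧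
            (∑ u : Tset, G.degree (u : V)) + rho cT = 3 * cT ∧
            (cT % 4 = 0 ∨ cT % 4 = 1)) ∨
          (cS = 1 ∧ (∑ u : Sset, G.degree (u : V)) = 0 ∧
            (∑ u : Tset, G.degree (u : V)) + rho cT = 3 * cT ∧
            (cT % 4 = 0 ∨ cT % 4 = 1)) := by
        rcases rho_spec N with ⟨h1, h2⟩ | ⟨h1, h2⟩ | ⟨h1, h2⟩ | ⟨h1, h2⟩ <;>
          rcases rho_spec cT with ⟨g1, g2⟩ | ⟨g1, g2⟩ | ⟨g1, g2⟩ | ⟨g1, g2⟩ <;>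
          rcases wval_spec cS with ⟨f1, f2⟩ | ⟨f1, f2⟩ | ⟨f1, f2⟩ | ⟨f1, f2⟩ | ⟨f1, f2⟩ <;>
          omega
      by_cases hvS : v ∈ Sset
      · have hdegv : G.degree v = (G.induce Sset).degree ⟨v, hvS⟩ := (dS ⟨v, hvS⟩).symm
        rcases hkey with ⟨hc4, hD12, _, _⟩ | ⟨hc1, hD0, _, _⟩
        · right
          have hdle : ∀ u : Sset, (G.induce Sset).degree u ≤ 3 := by
            intro u
            have := (G.induce Sset).degree_lt_card_verts u
            have : Fintype.card Sset = 4 := by rw [← hcSdef]; exact hc4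
            omega
          have hrest : ∑ u ∈ univ.erase (⟨v, hvS⟩ : Sset), (G.induce Sset).degree u
              ≤ (univ.erase (⟨v, hvS⟩ : Sset)).card * 3 := by
            have := Finset.sum_le_card_nsmul (univ.erase (⟨v, hvS⟩ : Sset))
              (fun u : Sset => (G.induce Sset).degree u) 3 (fun u _ => hdle u)
            rwa [smul_eq_mul] at this
          have hcarde : (univ.erase (⟨v, hvS⟩ : Sset)).card = 3 := by
            rw [Finset.card_erase_of_mem (mem_univ _), Finset.card_univ, ← hcSdef]
            omega
          have htot : (G.induce Sset).degree ⟨v, hvS⟩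
              + ∑ u ∈ univ.erase (⟨v, hvS⟩ : Sset), (G.induce Sset).degree u
              = ∑ u : Sset, (G.induce Sset).degree u :=
            Finset.add_sum_erase univ (fun u : Sset => (G.induce Sset).degree u) (mem_univ _)
          have hDS : (∑ u : Sset, (G.induce Sset).degree u) = 12 := by
            rw [Finset.sum_congr rfl (fun u _ => dS u)]; exact hD12
          rw [hcarde] at hrest
          have := hdle ⟨v, hvS⟩
          omega
        · left
          have hDS : (∑ u : Sset, (G.induce Sset).degree u) = 0 := by
            rw [Finset.sum_congr rfl (fun u _ => dS u)]; exact hD0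
          have hle : (G.induce Sset).degree ⟨v, hvS⟩
              ≤ ∑ u : Sset, (G.induce Sset).degree u :=
            Finset.single_le_sum (f := fun u : Sset => (G.induce Sset).degree u)
              (fun u _ => Nat.zero_le _) (Finset.mem_univ (⟨v, hvS⟩ : Sset))
          omega
      · have hvT : v ∈ Tset := hvS
        have hdegv : G.degree v = (G.induce Tset).degree ⟨v, hvT⟩ := (dT ⟨v, hvT⟩).symm
        have heqT : (∑ u : Tset, (G.induce Tset).degree u) + rho cT = 3 * cT := by
          rw [Finset.sum_congr rfl (fun u _ => dT u)]
          rcases hkey with ⟨_, _, h, _⟩ | ⟨_, _, h, _⟩ <;> exact h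
        have hmodT : cT % 4 = 0 ∨ cT % 4 = 1 := by
          rcases hkey with ⟨_, _, _, h⟩ | ⟨_, _, _, h⟩ <;> exact h
        have := ihT.2 hmodT heqT ⟨v, hvT⟩
        rw [hdegv]
        exact this

/-- If `r ≡ 3 (mod 4)` and `n = 3r`, then every `r`-edge-colouring of `K_n` contains a
monochromatic copy of `P₅`. -/
theorem mono_P5_three_mod_four (r n : ℕ) (hr : r % 4 = 3) (hn : n = 3 * r)
    (C : Sym2 (Fin n) → Fin r) : HasMonoPath 5 C := by
  by_contra hmono
  rw [HasMonoPath] at hmono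
  push_neg at hmono
  have hr3 : 3 ≤ r := by omega
  have hn9 : 9 ≤ n := by omega
  have hn1 : n % 4 = 1 := by omega
  letI instAdj : ∀ c : Fin r, DecidableRel (colorClass C c).Adj := fun c u v =>
    decidable_of_iff (C s(u, v) = c ∧ u ≠ v)
      (by rw [colorClass, fromEdgeSet_adj]; exact Iff.rfl)
  have hrho : rho n = 3 := by
    rcases rho_spec n with ⟨h1, h2⟩ | ⟨h1, h2⟩ | ⟨h1, h2⟩ | ⟨h1, h2⟩ <;> omega
  -- per-vertex degree sum over colours
  have hdeg : ∀ v : Fin n, ∑ c : Fin r, (colorClass C c).degree v = n - 1 := by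
    intro v
    have hfib : ∀ c : Fin r, (colorClass C c).degree v
        = ((univ.erase v).filter (fun u => C s(v, u) = c)).card := by
      intro c
      have : (colorClass C c).neighborFinset v
          = (univ.erase v).filter (fun u => C s(v, u) = c) := by
        ext u
        rw [mem_neighborFinset]
        constructor
        · intro h
          have h' := ((fromEdgeSet_adj _).mp h)
          refine Finset.mem_filter.mpr ⟨Finset.mem_erase.mpr ⟨fun hh => h'.2 hh.symm, mem_univ u⟩, h'.1⟩
        · intro h
          obtain ⟨h1, h2⟩ := Finset.mem_filter.mp h
          exact (fromEdgeSet_adj _).mpr ⟨h2, fun hh => (Finset.mem_erase.mp h1).1 hh.symm⟩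
      rw [← card_neighborFinset_eq_degree, this]
    have hpart : (univ.erase v).card
        = ∑ c : Fin r, ((univ.erase v).filter (fun u => C s(v, u) = c)).card :=
      Finset.card_eq_sum_card_fiberwise (fun u _ => mem_univ _)
    have hcarde : (univ.erase v).card = n - 1 := by
      rw [Finset.card_erase_of_mem (mem_univ v), Finset.card_univ, Fintype.card_fin]
    rw [Finset.sum_congr rfl (fun c _ => hfib c), ← hpart, hcarde]
  -- total degree sum
  have htot : ∑ c : Fin r, (∑ v, (colorClass C c).degree v) = n * (n - 1) := by
    rw [Finset.sum_comm]
    rw [Finset.sum_congr rfl (fun v _ => hdeg v)]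
    rw [Finset.sum_const, Finset.card_univ, Fintype.card_fin, smul_eq_mul]
  -- each colour satisfies the bound
  have hbound : ∀ c : Fin r, (∑ v, (colorClass C c).degree v) + rho n ≤ 3 * n := fun c =>
    (GLem n (Fin n) inferInstance inferInstance (colorClass C c) (instAdj c)
      (Fintype.card_fin n) (hmono c)).1
  -- auxiliary products
  have haux1 : n * (n - 1) + n = n * n := by
    cases n with
    | zero => simp
    | succ m => simp [Nat.succ_sub_one]; ring
  have haux2 : r * (3 * n) = n * n := by rw [hn]; ring
  -- equality for each colour
  have heach : ∀ c : Fin r, (∑ v, (colorClass C c).degree v) + rho n = 3 * n := by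
    intro c
    by_contra hne
    have hlt : (∑ v, (colorClass C c).degree v) + rho n < 3 * n :=
      lt_of_le_of_ne (hbound c) hne
    have hstrict : ∑ c : Fin r, ((∑ v, (colorClass C c).degree v) + rho n)
        < ∑ _c : Fin r, 3 * n :=
      Finset.sum_lt_sum (fun i _ => hbound i) ⟨c, mem_univ c, hlt⟩
    have hS : ∑ c : Fin r, ((∑ v, (colorClass C c).degree v) + rho n)
        = n * (n - 1) + r * 3 := by
      rw [Finset.sum_add_distrib, htot, hrho, Finset.sum_const, Finset.card_univ,
        Fintype.card_fin, smul_eq_mul]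
    have hT : ∑ _c : Fin r, 3 * n = r * (3 * n) := by
      rw [Finset.sum_const, Finset.card_univ, Fintype.card_fin, smul_eq_mul]
    rw [hS, hT] at hstrict
    omega
  -- all degrees are 0 or 3
  have hdeg03 : ∀ (c : Fin r) (v : Fin n), (colorClass C c).degree v = 0 ∨
      (colorClass C c).degree v = 3 := fun c =>
    (GLem n (Fin n) inferInstance inferInstance (colorClass C c) (instAdj c)
      (Fintype.card_fin n) (hmono c)).2 (Or.inr hn1) (heach c)
  -- contradiction via a fixed vertex
  have hv0 : (0 : ℕ) < n := by omega
  set v0 : Fin n := ⟨0, hv0⟩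
  have hdvd : 3 ∣ ∑ c : Fin r, (colorClass C c).degree v0 := by
    apply Finset.dvd_sum
    intro c _
    rcases hdeg03 c v0 with h | h <;> simp [h]
  rw [hdeg v0] at hdvd
  obtain ⟨k, hk⟩ := hdvd
  omega
end
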